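/- arXiv:2511.13498 — 7 statements merged into one kernel-verified Lean document; each statement's English description precedes it below -/
import Mathlib

section
/- Let n and k be natural numbers and let M be a family of k-element subsets of [n] = {1,…,n}. Then M satisfies the basis exchange property if and only if M satisfies the type A strong exchange equations, i.e. for every (k−1)-element subset I ⊆ [n] and every (k+1)-element subset J ⊆ [n] with |J \ I| ≥ 3, the number of elements i ∈ J \ I such that both I ∪ {i} ∈ M and J \ {i} ∈ M is not equal to 1. -/
/-- A family of `k`-element subsets of `[n]` satisfies the basis exchange
property iff it satisfies the type A strong exchange equations. -/
theorem typeA_basis_exchange_iff_strong_exchange_equations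
    (n k : ℕ) (M : Finset (Finset (Fin n)))
    (hM : ∀ A ∈ M, A.card = k) :
    (∀ A ∈ M, ∀ B ∈ M, ∀ a ∈ A \ B, ∃ b ∈ B \ A, insert b (A.erase a) ∈ M)
    ↔
    (∀ I J : Finset (Fin n), I.card + 1 = k → J.card = k + 1 → 3 ≤ (J \ I).card →
      ((J \ I).filter (fun i => insert i I ∈ M ∧ J.erase i ∈ M)).card ≠ 1) := by
  constructor
  · -- forward direction: exchange property implies the count is never 1
    intro hex I J hIc hJc hJI hcard
    obtain ⟨i₀, hfil⟩ := Finset.card_eq_one.mp hcard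
    have hi₀mem : i₀ ∈ (J \ I).filter (fun i => insert i I ∈ M ∧ J.erase i ∈ M) := by
      rw [hfil]; exact Finset.mem_singleton_self i₀
    rw [Finset.mem_filter, Finset.mem_sdiff] at hi₀mem
    obtain ⟨⟨hi₀J, hi₀I⟩, hA₀, hB₀⟩ := hi₀mem
    have huniq : ∀ x ∈ J \ I, insert x I ∈ M → J.erase x ∈ M → x = i₀ := by
      intro x hx h1 h2
      have : x ∈ (J \ I).filter (fun i => insert i I ∈ M ∧ J.erase i ∈ M) :=
        Finset.mem_filter.mpr ⟨hx, h1, h2⟩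
      rw [hfil, Finset.mem_singleton] at this; exact this
    -- Build the matroid on `Fin n` whose bases are the members of `M`
    set Mb : Set (Fin n) → Prop := fun s => ∃ A ∈ M, (A : Set (Fin n)) = s with hMb
    have exch : Matroid.ExchangeProperty Mb := by
      rintro X Y ⟨A, hA, rfl⟩ ⟨B, hB, rfl⟩ a ha
      have haAB : a ∈ A \ B := by
        rw [Finset.mem_sdiff]; simpa using ha
      obtain ⟨b, hb, hins⟩ := hex A hA B hB a haAB
      refine ⟨b, by simpa using hb, insert b (A.erase a), hins, ?_⟩
      push_cast
      rfl
    set Mtd : Matroid (Fin n) :=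
      Matroid.ofIsBaseOfFinite Set.finite_univ Mb
        ⟨(insert i₀ I : Finset (Fin n)), ⟨insert i₀ I, hA₀, rfl⟩⟩ exch
        (fun B _ => Set.subset_univ _) with hMtd
    have hbase : ∀ s, Mtd.IsBase s ↔ Mb s := by
      intro s; rw [hMtd]; simp
    have hE : Mtd.E = Set.univ := by rw [hMtd]; simp
    -- any independent set which is a k-element finset is in M
    have indep_card : ∀ C : Finset (Fin n), Mtd.Indep (C : Set (Fin n)) → C.card = k → C ∈ M := by
      intro C hind hCc
      obtain ⟨Bs, hBs, hsub⟩ := hind.exists_isBase_superset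
      obtain ⟨A', hA', rfl⟩ := (hbase _).mp hBs
      have hCA : C ⊆ A' := by exact_mod_cast hsub
      have : C = A' := Finset.eq_of_subset_of_card_le hCA (by rw [hM A' hA', hCc])
      rwa [this]
    have hA₀base : Mtd.IsBase ((insert i₀ I : Finset (Fin n)) : Set (Fin n)) :=
      (hbase _).mpr ⟨insert i₀ I, hA₀, rfl⟩
    have hB₀base : Mtd.IsBase ((J.erase i₀ : Finset (Fin n)) : Set (Fin n)) :=
      (hbase _).mpr ⟨J.erase i₀, hB₀, rfl⟩
    have hIindep : Mtd.Indep (I : Set (Fin n)) :=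
      hA₀base.indep.subset (by push_cast; exact Set.subset_insert _ _)
    have hi₀cl : (i₀ : Fin n) ∉ Mtd.closure (I : Set (Fin n)) := by
      rw [hIindep.notMem_closure_iff_of_notMem (by exact_mod_cast hi₀I) (by rw [hE]; trivial)]
      have : ((insert i₀ I : Finset (Fin n)) : Set (Fin n)) = insert i₀ (I : Set (Fin n)) := by
        push_cast; rfl
      rw [← this]; exact hA₀base.indep
    -- W = part of B₀ inside the closure of I
    set W : Set (Fin n) := (J.erase i₀ : Finset (Fin n)) ∩ Mtd.closure (I : Set (Fin n)) with hW
    have hWB₀ : W ⊆ ((J.erase i₀ : Finset (Fin n)) : Set (Fin n)) := Set.inter_subset_left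
    have hWcl : W ⊆ Mtd.closure (I : Set (Fin n)) := Set.inter_subset_right
    have hWindep : Mtd.Indep W := hB₀base.indep.subset hWB₀
    have hi₀W : i₀ ∉ W := fun h => hi₀cl (hWcl h)
    have hiWindep : Mtd.Indep (insert i₀ W) := by
      rw [hWindep.insert_indep_iff_of_notMem hi₀W]
      refine ⟨by rw [hE]; trivial, fun h => hi₀cl ?_⟩
      exact Matroid.closure_subset_closure_of_subset_closure hWcl h
    obtain ⟨B', hB'base, hsubB', hB'sub⟩ := hiWindep.exists_isBase_subset_union_isBase hB₀base
    obtain ⟨A', hA', rfl⟩ := (hbase _).mp hB'base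
    have hA'J : A' ⊆ J := by
      have h1 : (A' : Set (Fin n)) ⊆ (J : Set (Fin n)) := by
        refine hB'sub.trans ?_
        intro y hy
        rcases hy with hy | hy
        · rcases hy with rfl | hy
          · exact_mod_cast hi₀J
          · have := hWB₀ hy
            exact_mod_cast Finset.erase_subset _ _ (by exact_mod_cast this)
        · exact_mod_cast Finset.erase_subset _ _ (by exact_mod_cast hy)
      exact_mod_cast h1
    have hA'c : A'.card = k := hM A' hA'
    have hJA' : (J \ A').card = 1 := by
      rw [Finset.card_sdiff_of_subset hA'J, hJc, hA'c]; omega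
    obtain ⟨x, hx⟩ := Finset.card_eq_one.mp hJA'
    have hxJA : x ∈ J \ A' := by rw [hx]; exact Finset.mem_singleton_self x
    rw [Finset.mem_sdiff] at hxJA
    obtain ⟨hxJ, hxA'⟩ := hxJA
    have hA'eq : A' = J.erase x := by
      apply Finset.eq_of_subset_of_card_le
      · intro y hy
        rw [Finset.mem_erase]
        exact ⟨fun h => hxA' (h ▸ hy), hA'J hy⟩
      · rw [Finset.card_erase_of_mem hxJ, hJc, hA'c]
        omega
    have hi₀B' : (i₀ : Fin n) ∈ (A' : Set (Fin n)) := hsubB' (Set.mem_insert _ _)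
    have hxi₀ : x ≠ i₀ := by
      intro h; subst h
      exact hxA' (by exact_mod_cast hi₀B')
    have hxB₀ : x ∈ J.erase i₀ := Finset.mem_erase.mpr ⟨hxi₀, hxJ⟩
    have hxcl : (x : Fin n) ∉ Mtd.closure (I : Set (Fin n)) := by
      intro h
      have hxW : x ∈ W := ⟨by exact_mod_cast hxB₀, h⟩
      have : (x : Fin n) ∈ (A' : Set (Fin n)) := hsubB' (Set.mem_insert_of_mem _ hxW)
      exact hxA' (by exact_mod_cast this)
    have hxI : x ∉ I := fun h => hxcl (Mtd.mem_closure_of_mem (by exact_mod_cast h) (by rw [hE]; exact Set.subset_univ _))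
    have hxindep : Mtd.Indep ((insert x I : Finset (Fin n)) : Set (Fin n)) := by
      have : ((insert x I : Finset (Fin n)) : Set (Fin n)) = insert x (I : Set (Fin n)) := by
        push_cast; rfl
      rw [this, hIindep.insert_indep_iff_of_notMem (by exact_mod_cast hxI)]
      exact ⟨by rw [hE]; trivial, hxcl⟩
    have hxM : insert x I ∈ M := indep_card _ hxindep (by rw [Finset.card_insert_of_notMem hxI, hIc])
    have hxErase : J.erase x ∈ M := hA'eq ▸ hA'
    have : x = i₀ := huniq x (Finset.mem_sdiff.mpr ⟨hxJ, hxI⟩) hxM hxErase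
    exact hxi₀ this
  · -- reverse direction
    intro h A hA B hB a haAB
    rw [Finset.mem_sdiff] at haAB
    obtain ⟨haA, haB⟩ := haAB
    have hcards : (A \ B).card = (B \ A).card :=
      Finset.card_sdiff_comm (by rw [hM A hA, hM B hB])
    have hABpos : 0 < (A \ B).card :=
      Finset.card_pos.mpr ⟨a, Finset.mem_sdiff.mpr ⟨haA, haB⟩⟩
    rcases eq_or_lt_of_le (Nat.one_le_iff_ne_zero.mpr (by omega) : 1 ≤ (B \ A).card) with h1 | h1
    · -- |B \ A| = 1 : direct swap gives B
      obtain ⟨b, hb⟩ := Finset.card_eq_one.mp h1.symm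
      have hbBA : b ∈ B \ A := by rw [hb]; exact Finset.mem_singleton_self b
      rw [Finset.mem_sdiff] at hbBA
      have hABa : A \ B = {a} := by
        have := Finset.card_eq_one.mp (by omega : (A \ B).card = 1)
        obtain ⟨c, hc⟩ := this
        have : a ∈ ({c} : Finset (Fin n)) := hc ▸ Finset.mem_sdiff.mpr ⟨haA, haB⟩
        rw [Finset.mem_singleton] at this
        rw [hc, this]
      refine ⟨b, Finset.mem_sdiff.mpr hbBA, ?_⟩
      have : insert b (A.erase a) = B := by
        ext y
        simp only [Finset.mem_insert, Finset.mem_erase]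
        constructor
        · rintro (rfl | ⟨hya, hyA⟩)
          · exact hbBA.1
          · by_contra hyB
            have : y ∈ A \ B := Finset.mem_sdiff.mpr ⟨hyA, hyB⟩
            rw [hABa, Finset.mem_singleton] at this
            exact hya this
        · intro hyB
          by_cases hyA : y ∈ A
          · exact Or.inr ⟨fun h => haB (h ▸ hyB), hyA⟩
          · left
            have : y ∈ B \ A := Finset.mem_sdiff.mpr ⟨hyB, hyA⟩
            rw [hb, Finset.mem_singleton] at this
            exact this
      rwa [this]
    · -- |B \ A| ≥ 2 : use the strong exchange count
      set I := A.erase a with hI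
      set J := insert a B with hJ
      have hk : A.card = k := hM A hA
      have hIc : I.card + 1 = k := by
        rw [hI, Finset.card_erase_of_mem haA, hk]
        have : 1 ≤ A.card := Finset.card_pos.mpr ⟨a, haA⟩
        omega
      have hJc : J.card = k + 1 := by
        rw [hJ, Finset.card_insert_of_notMem haB, hM B hB]
      have hJIeq : J \ I = insert a (B \ A) := by
        ext y
        simp only [hJ, hI, Finset.mem_sdiff, Finset.mem_insert, Finset.mem_erase, not_and]
        constructor
        · rintro ⟨rfl | hyB, hy⟩
          · exact Or.inl rfl
          · by_cases hya : y = a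
            · exact Or.inl hya
            · exact Or.inr ⟨hyB, hy hya⟩
        · rintro (rfl | ⟨hyB, hyA⟩)
          · exact ⟨Or.inl rfl, fun h => absurd rfl h⟩
          · exact ⟨Or.inr hyB, fun _ => hyA⟩
      have hJI3 : 3 ≤ (J \ I).card := by
        rw [hJIeq, Finset.card_insert_of_notMem (fun hc => haB (Finset.mem_sdiff.mp hc).1)]
        omega
      have hne := h I J hIc hJc hJI3
      have haFil : a ∈ (J \ I).filter (fun i => insert i I ∈ M ∧ J.erase i ∈ M) := by
        refine Finset.mem_filter.mpr ⟨?_, ?_, ?_⟩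
        · rw [hJIeq]; exact Finset.mem_insert_self a _
        · rw [hI, Finset.insert_erase haA]; exact hA
        · rw [hJ, Finset.erase_insert haB]; exact hB
      have hfpos : 1 ≤ ((J \ I).filter (fun i => insert i I ∈ M ∧ J.erase i ∈ M)).card :=
        Finset.card_pos.mpr ⟨a, haFil⟩
      have hf2 : 1 < ((J \ I).filter (fun i => insert i I ∈ M ∧ J.erase i ∈ M)).card := by
        omega
      obtain ⟨b, hbFil, hba⟩ := Finset.exists_mem_ne hf2 a
      rw [Finset.mem_filter] at hbFil
      obtain ⟨hbJI, hbIns, _⟩ := hbFil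
      rw [hJIeq, Finset.mem_insert] at hbJI
      rcases hbJI with rfl | hbBA
      · exact absurd rfl hba
      · exact ⟨b, hbBA, hbIns⟩
end

section
/- Let M be a set system on [n] that is a strong Δ-matroid, i.e. M satisfies both the symmetric exchange property and the strong exchange property for Δ-matroids. If I, J ∈ M are such that |I Δ J| is odd, then there exists i ∈ I Δ J such that I Δ {i} ∈ M and J Δ {i} ∈ M. -/
open scoped symmDiff

/-- The symmetric exchange property for Δ-matroids. -/
def SymmetricExchange {n : ℕ} (M : Finset (Finset (Fin n))) : Prop :=
  ∀ A ∈ M, ∀ B ∈ M, ∀ a ∈ A ∆ B, ∃ b ∈ A ∆ B, A ∆ {a, b} ∈ M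

/-- The strong exchange property for Δ-matroids. -/
def StrongExchange {n : ℕ} (M : Finset (Finset (Fin n))) : Prop :=
  ∀ A ∈ M, ∀ B ∈ M, A ≠ B →
    ∃ a ∈ A ∆ B, ∃ b ∈ A ∆ B, A ∆ {a, b} ∈ M ∧ B ∆ {a, b} ∈ M

/-!
Induct on `|I ∆ J|`. Strong exchange yields `a, b ∈ I ∆ J` with `I ∆ {a, b} ∈ M`, and if `a = b`
we are done. Otherwise, call `x` *good* if `J ∆ {x} ∈ M` and keep a pair `T ⊆ I ∆ J` with
`I ∆ T ∈ M`. Induction applied to `I ∆ T` and `J` gives a good `i ∉ T` with `I ∆ T ∆ {i} ∈ M`.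
Now `I` and `I ∆ U`, where `U = T ∪ {i}`, are at distance three, and there strong exchange
already gives a common single exchange: some `c ∈ U` with `I ∆ {c}, I ∆ U ∆ {c} ∈ M`. If `c` is
good we are done; otherwise replacing `T` by `U \ {c}` trades the bad `c` for the good `i`,
so after at most two such rounds we succeed.
-/

open Finset

namespace Finset

variable {α : Type*} [DecidableEq α] {s : Finset α} {a : α}

theorem symmDiff_singleton_of_mem (h : a ∈ s) : s ∆ {a} = s.erase a := by
  rw [symmDiff_of_ge (singleton_subset_iff.2 h), sdiff_singleton_eq_erase]

theorem symmDiff_singleton_of_notMem (h : a ∉ s) : s ∆ {a} = insert a s := by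
  rw [(disjoint_singleton_right.2 h).symmDiff_eq_sup, sup_eq_union, union_comm, ← insert_eq]

end Finset

namespace StrongExchange

variable {n : ℕ} {M : Finset (Finset (Fin n))}

theorem exists_singleton_of_card_three (h : StrongExchange M) {A U : Finset (Fin n)}
    (hA : A ∈ M) (hAU : A ∆ U ∈ M) (hU : #U = 3) :
    ∃ c ∈ U, A ∆ {c} ∈ M ∧ A ∆ U ∆ {c} ∈ M := by
  have hne : A ≠ A ∆ U := by
    rw [ne_comm, Ne, symmDiff_eq_left]
    rintro rfl
    simp at hU
  obtain ⟨p, hp, q, hq, hApq, hAUpq⟩ := h A hA (A ∆ U) hAU hne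
  rw [symmDiff_symmDiff_cancel_left] at hp hq
  obtain rfl | hpq := eq_or_ne p q
  · rw [pair_eq_singleton] at hApq hAUpq
    exact ⟨p, hp, hApq, hAUpq⟩
  have hpqU : {p, q} ⊆ U := insert_subset hp (singleton_subset_iff.2 hq)
  obtain ⟨r, hr⟩ : ∃ r, U \ {p, q} = {r} := by
    rw [← card_eq_one, card_sdiff_of_subset hpqU, hU, card_pair hpq]
  have hrU : r ∈ U := (mem_sdiff.1 (hr ▸ mem_singleton_self r)).1
  rw [← symmDiff_of_ge hpqU] at hr
  -- `U` is the disjoint union of `{p, q}` and `{r}`: exchanging `{p, q}` on one side of `A`,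
  -- `A ∆ U` is exchanging `r` on the other
  refine ⟨r, hrU, ?_, ?_⟩
  · rwa [← hr, ← symmDiff_assoc]
  · rwa [← hr, symmDiff_assoc, symmDiff_symmDiff_cancel_left]

theorem exists_singleton_of_pair (h : StrongExchange M) {A B : Finset (Fin n)} (hA : A ∈ M)
    (hodd : Odd #(A ∆ B))
    (ih : ∀ A' ∈ M, #(A' ∆ B) < #(A ∆ B) → Odd #(A' ∆ B) →
      ∃ i ∈ A' ∆ B, A' ∆ {i} ∈ M ∧ B ∆ {i} ∈ M)
    {T : Finset (Fin n)} (hTAB : T ⊆ A ∆ B) (hT : #T = 2) (hAT : A ∆ T ∈ M) :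
    ∃ i ∈ A ∆ B, A ∆ {i} ∈ M ∧ B ∆ {i} ∈ M := by
  induction hbad : #{x ∈ T | B ∆ {x} ∉ M} using Nat.strong_induction_on generalizing T with
  | _ k hk =>
  have hATB : A ∆ T ∆ B = A ∆ B \ T := by rw [symmDiff_right_comm, symmDiff_of_ge hTAB]
  have hcard : #(A ∆ T ∆ B) = #(A ∆ B) - 2 := by rw [hATB, card_sdiff_of_subset hTAB, hT]
  have hAB2 : 2 ≤ #(A ∆ B) := hT ▸ card_le_card hTAB
  obtain ⟨i, hi, hATi, hBi⟩ :=
    ih (A ∆ T) hAT (by omega) (hcard ▸ Nat.Odd.sub_even hAB2 hodd even_two)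
  rw [hATB, mem_sdiff] at hi
  have hUAB : insert i T ⊆ A ∆ B := insert_subset hi.1 hTAB
  have hU : #(insert i T) = 3 := by rw [card_insert_of_notMem hi.2, hT]
  obtain ⟨c, hcU, hAc, hAUc⟩ := h.exists_singleton_of_card_three hA
    (by rwa [← symmDiff_singleton_of_notMem hi.2, ← symmDiff_assoc]) hU
  by_cases hBc : B ∆ {c} ∈ M
  · exact ⟨c, hUAB hcU, hAc, hBc⟩
  have hcT : c ∈ T := (mem_insert.1 hcU).resolve_left (by rintro rfl; exact hBc hBi)
  refine hk _ ?_ ((erase_subset c _).trans hUAB) (by rw [card_erase_of_mem hcU, hU])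
    (by rwa [← symmDiff_singleton_of_mem hcU, ← symmDiff_assoc]) rfl
  rw [← hbad]
  refine card_lt_card ((ssubset_iff_of_subset ?_).2 ⟨c, by simp [hcT, hBc], by simp⟩)
  intro x hx
  simp only [mem_filter, mem_erase, mem_insert] at hx ⊢
  obtain ⟨⟨-, rfl | hxT⟩, hBx⟩ := hx
  · exact absurd hBi hBx
  · exact ⟨hxT, hBx⟩

end StrongExchange

theorem strong_delta_matroid_odd_antipode_exchange_general
    {n : ℕ} (M : Finset (Finset (Fin n)))
    (h2 : StrongExchange M)
    {I J : Finset (Fin n)} (hI : I ∈ M) (hJ : J ∈ M)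
    (hodd : Odd (I ∆ J).card) :
    ∃ i ∈ I ∆ J, I ∆ {i} ∈ M ∧ J ∆ {i} ∈ M := by
  induction hd : #(I ∆ J) using Nat.strong_induction_on generalizing I with
  | _ d ihd =>
  have hIJ : I ≠ J := by
    rintro rfl
    simp at hodd
  obtain ⟨a, ha, b, hb, hIab, hJab⟩ := h2 I hI J hJ hIJ
  obtain rfl | hab := eq_or_ne a b
  · rw [pair_eq_singleton] at hIab hJab
    exact ⟨a, ha, hIab, hJab⟩
  exact h2.exists_singleton_of_pair hI hodd
    (fun I' hI' hlt hodd' ↦ ihd _ (hd ▸ hlt) hI' hodd' rfl)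
    (insert_subset ha (singleton_subset_iff.2 hb)) (card_pair hab) hIab

/-- In a strong Δ-matroid, if `|I Δ J|` is odd then some single element
exchange works simultaneously for `I` and `J`. -/
theorem strong_delta_matroid_odd_antipode_exchange
    {n : ℕ} (M : Finset (Finset (Fin n)))
    (h1 : SymmetricExchange M) (h2 : StrongExchange M)
    {I J : Finset (Fin n)} (hI : I ∈ M) (hJ : J ∈ M)
    (hodd : Odd (I ∆ J).card) :
    ∃ i ∈ I ∆ J, I ∆ {i} ∈ M ∧ J ∆ {i} ∈ M :=
  strong_delta_matroid_odd_antipode_exchange_general M h2 hI hJ hodd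
end

section
/- Let M be a set system on [n]. The following are equivalent: (1) M is an even Δ-matroid, i.e. M is an even set system satisfying the symmetric exchange property; (2) M satisfies the strong exchange property for even Δ-matroids: for all distinct A, B ∈ M there exist distinct a, b ∈ A Δ B such that A Δ {a,b} ∈ M and B Δ {a,b} ∈ M; (3) M satisfies Wenzel's exchange property: for all A, B ∈ M and every a ∈ A Δ B there exists b ∈ (A Δ B) \ {a} such that A Δ {a,b} ∈ M and B Δ {a,b} ∈ M. -/
/-!
Strong exchange moves `A` to a member `A ∆ {a, b}` closer to `B`, so induction on `#(A ∆ B)`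
gives both parity and symmetric exchange; Wenzel's property yields strong exchange at once.

Conversely, call `x` an `A`-partner of `a` if `A ∆ {a, x} ∈ M`, and take `A, B, a` violating
Wenzel's property (no common `A`- and `B`-partner) with `#(A ∆ B)` minimal. Evenness excludes
`A ∆ {a} ∈ M`, so symmetric exchange gives an `A`-partner `b` and some `s ∉ {a, b}` with
`B ∆ {b, s} ∈ M`; hence the even number `#(A ∆ B)` is at least 4. If it is larger, minimality
for `(A, B ∆ {b, s}, a)` and then for `(B ∆ {b, s} ∆ {a, z}, B, a)`, whose symmetric difference
is `{b, s, a, z}`, makes `s` a `B`-partner and produces an `A`-partner `z` with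
`B ∆ {b, z} ∈ M`; repeating with `z` in place of `s` makes `z` a common partner. If
`#(A ∆ B) = 4`, then `A ∆ p = B ∆ q` for complementary pairs `p, q`, and symmetric exchange at
`s` and at `a` leads to the same contradiction.
-/

open scoped symmDiff

theorem symmDiff_eq_symmDiff_iff {β : Type*} [GeneralizedBooleanAlgebra β] {a b c d : β} :
    a ∆ c = b ∆ d ↔ a ∆ b = c ∆ d := by
  rw [← symmDiff_eq_bot, symmDiff_symmDiff_symmDiff_comm, symmDiff_eq_bot]

open Finset

variable {α : Type*} [DecidableEq α]

namespace Finset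

theorem card_symmDiff_add_two_mul_card_inter (s t : Finset α) :
    #(s ∆ t) + 2 * #(s ∩ t) = #s + #t := by
  rw [symmDiff_eq_sup_sdiff_inf, sup_eq_union, inf_eq_inter,
    card_sdiff_of_subset inter_subset_union, ← card_union_add_card_inter]
  have := card_le_card (inter_subset_union (s := s) (t := t))
  omega

theorem card_symmDiff_mod_two (s t : Finset α) : #(s ∆ t) % 2 = (#s + #t) % 2 := by
  have := card_symmDiff_add_two_mul_card_inter s t
  omega

theorem card_symmDiff_le (s t : Finset α) : #(s ∆ t) ≤ #s + #t := by
  have := card_symmDiff_add_two_mul_card_inter s t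
  omega

theorem card_symmDiff_pair_lt {s : Finset α} {a b : α} (ha : a ∈ s) (hb : b ∈ s) :
    #(s ∆ {a, b}) < #s := by
  have hsub : {a, b} ⊆ s := insert_subset ha (singleton_subset_iff.2 hb)
  rw [symmDiff_of_ge hsub]
  exact card_lt_card (sdiff_ssubset hsub (insert_nonempty a {b}))

@[elab_as_elim]
theorem induction_on_card_symmDiff {P : Finset α → Finset α → Prop}
    (ind : ∀ A B, (∀ A' B', #(A' ∆ B') < #(A ∆ B) → P A' B') → P A B)
    (A B : Finset α) : P A B :=
  ind A B fun A' B' _ => induction_on_card_symmDiff ind A' B'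
termination_by #(A ∆ B)

end Finset

section SetSystem

variable (M : Set (Finset α))

def IsEvenSetSystem : Prop :=
  ∀ A ∈ M, ∀ B ∈ M, #A % 2 = #B % 2

def HasSymmetricExchange : Prop :=
  ∀ A ∈ M, ∀ B ∈ M, ∀ a ∈ A ∆ B, ∃ b ∈ A ∆ B, A ∆ {a, b} ∈ M

def HasStrongExchange : Prop :=
  ∀ A ∈ M, ∀ B ∈ M, A ≠ B →
    ∃ a ∈ A ∆ B, ∃ b ∈ A ∆ B, a ≠ b ∧ A ∆ {a, b} ∈ M ∧ B ∆ {a, b} ∈ M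

def WenzelExchangeAt (A B : Finset α) (a : α) : Prop :=
  ∃ b ∈ (A ∆ B).erase a, A ∆ {a, b} ∈ M ∧ B ∆ {a, b} ∈ M

def HasWenzelExchange : Prop :=
  ∀ A ∈ M, ∀ B ∈ M, ∀ a ∈ A ∆ B, WenzelExchangeAt M A B a

variable {M} {A B : Finset α} {a : α}

theorem IsEvenSetSystem.even_card_symmDiff (hM : IsEvenSetSystem M) (hA : A ∈ M)
    (hB : B ∈ M) : Even #(A ∆ B) := by
  have := card_symmDiff_mod_two A B
  have := hM A hA B hB
  rw [Nat.even_iff]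
  omega

theorem IsEvenSetSystem.symmDiff_singleton_notMem (hM : IsEvenSetSystem M) (hA : A ∈ M)
    (a : α) : A ∆ {a} ∉ M := fun h => by
  simpa [symmDiff_symmDiff_cancel_left] using hM.even_card_symmDiff hA h

theorem HasSymmetricExchange.exists_ne (hX : HasSymmetricExchange M) (hE : IsEvenSetSystem M)
    (hA : A ∈ M) (hB : B ∈ M) (ha : a ∈ A ∆ B) :
    ∃ b ∈ (A ∆ B).erase a, A ∆ {a, b} ∈ M := by
  obtain ⟨b, hb, hAb⟩ := hX A hA B hB a ha
  obtain rfl | hba := eq_or_ne b a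
  · exact absurd (by simpa using hAb) (hE.symmDiff_singleton_notMem hA b)
  · exact ⟨b, mem_erase.2 ⟨hba, hb⟩, hAb⟩

theorem HasWenzelExchange.hasStrongExchange (h : HasWenzelExchange M) :
    HasStrongExchange M := by
  intro A hA B hB hne
  obtain ⟨a, ha⟩ := symmDiff_nonempty.2 hne
  obtain ⟨b, hb, hAb, hBb⟩ := h A hA B hB a ha
  exact ⟨a, ha, b, mem_of_mem_erase hb, (ne_of_mem_erase hb).symm, hAb, hBb⟩

theorem HasStrongExchange.isEvenSetSystem (h : HasStrongExchange M) : IsEvenSetSystem M := by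
  intro A hA B hB
  induction A, B using induction_on_card_symmDiff with
  | ind A B IH =>
  obtain rfl | hne := eq_or_ne A B
  · rfl
  obtain ⟨a, ha, b, hb, hab, hAab, -⟩ := h A hA B hB hne
  have hlt : #(A ∆ {a, b} ∆ B) < #(A ∆ B) := by
    rw [symmDiff_right_comm]
    exact card_symmDiff_pair_lt ha hb
  have hpar := card_symmDiff_mod_two A {a, b}
  rw [card_pair hab, IH _ B hlt hAab hB] at hpar
  omega

theorem HasStrongExchange.hasSymmetricExchange (h : HasStrongExchange M) :
    HasSymmetricExchange M := by
  intro A hA B hB a ha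
  induction A, B using induction_on_card_symmDiff with
  | ind A B IH =>
  obtain ⟨x, hx, y, hy, -, hAxy, hBxy⟩ := h A hA B hB (symmDiff_nonempty.1 ⟨a, ha⟩)
  obtain rfl | hax := eq_or_ne a x
  · exact ⟨y, hy, hAxy⟩
  obtain rfl | hay := eq_or_ne a y
  · exact ⟨x, hx, pair_comm a x ▸ hAxy⟩
  have hD : A ∆ (B ∆ {x, y}) = (A ∆ B) ∆ {x, y} := (symmDiff_assoc A B _).symm
  have hsub : {x, y} ⊆ A ∆ B := insert_subset hx (singleton_subset_iff.2 hy)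
  obtain ⟨b, hb, hAb⟩ := IH A _ (hD ▸ card_symmDiff_pair_lt hx hy) hA hBxy
    (by simp [hD, mem_symmDiff, ha, hax, hay])
  rw [hD, symmDiff_of_ge hsub] at hb
  exact ⟨b, (mem_sdiff.1 hb).1, hAb⟩

end SetSystem

section Wenzel

variable {M : Set (Finset α)} {A B : Finset α} {a t u : α}

theorem wenzelExchangeAt_of_card_eq_four (hX : HasSymmetricExchange M) (hE : IsEvenSetSystem M)
    (hd : #(A ∆ B) = 4) (hA : A ∈ M) (hB : B ∈ M) (ha : a ∈ A ∆ B)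
    (ht : t ∈ (A ∆ B).erase a) (hu : u ∈ ((A ∆ B).erase a).erase t)
    (hAt : A ∆ {a, t} ∈ M) (hBtu : B ∆ {t, u} ∈ M) : WenzelExchangeAt M A B a := by
  by_contra hnot
  obtain ⟨hta, htD⟩ := mem_erase.1 ht
  obtain ⟨hut, hua, huD⟩ : u ≠ t ∧ u ≠ a ∧ u ∈ A ∆ B := by simpa using hu
  have hsub : {a, t, u} ⊆ A ∆ B := by simp [insert_subset_iff, ha, htD, huD]
  obtain ⟨z, hz⟩ : ∃ z, (A ∆ B) \ {a, t, u} = {z} := card_eq_one.1 (by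
    rw [card_sdiff_of_subset hsub, hd,
      card_eq_three.2 ⟨a, t, u, hta.symm, hua.symm, hut.symm, rfl⟩])
  obtain ⟨hzD, hza, hzt, hzu⟩ : z ∈ A ∆ B ∧ z ≠ a ∧ z ≠ t ∧ z ≠ u := by
    simpa using hz.symm.subset (mem_singleton_self z)
  have hD : A ∆ B = {z, a, t, u} := by rw [← sdiff_union_of_subset hsub, hz]; rfl
  have swap (p q : Finset α)
      (h : ({z, a, t, u} : Finset α) = p ∆ q := by
        ext; simp only [mem_symmDiff, mem_insert, mem_singleton]; grind) :
      A ∆ p = B ∆ q :=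
    symmDiff_eq_symmDiff_iff.2 (hD.trans h)
  have hAz : A ∆ {a, z} ∈ M := swap {a, z} {t, u} ▸ hBtu
  have hAu : A ∆ {a, u} ∈ M := by
    obtain ⟨x, hx, hAx⟩ := hX.exists_ne hE hA hB huD
    obtain rfl | rfl | rfl : x = z ∨ x = a ∨ x = t := by simp [hD] at hx; grind
    · exact (hnot ⟨t, ht, hAt, swap {u, x} {a, t} ▸ hAx⟩).elim
    · rwa [pair_comm]
    · exact (hnot ⟨z, mem_erase.2 ⟨hza, hzD⟩, hAz, swap {u, x} {a, z} ▸ hAx⟩).elim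
  obtain ⟨y, hy, hBy⟩ := hX.exists_ne hE hB hA (symmDiff_comm A B ▸ ha)
  rw [symmDiff_comm] at hy
  obtain rfl | rfl | rfl : y = z ∨ y = t ∨ y = u := by simp [hD] at hy; grind
  · exact hnot ⟨y, hy, hAz, hBy⟩
  · exact hnot ⟨y, hy, hAt, hBy⟩
  · exact hnot ⟨y, hy, hAu, hBy⟩

theorem symmDiff_pair_mem_of_not_wenzelExchangeAt
    (IH : ∀ A' B', #(A' ∆ B') < #(A ∆ B) → A' ∈ M → B' ∈ M →
      ∀ a' ∈ A' ∆ B', WenzelExchangeAt M A' B' a')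
    (hd : 4 < #(A ∆ B)) (hA : A ∈ M) (hB : B ∈ M) (ha : a ∈ A ∆ B)
    (hnot : ¬ WenzelExchangeAt M A B a) (ht : t ∈ (A ∆ B).erase a)
    (hu : u ∈ ((A ∆ B).erase a).erase t) (hAt : A ∆ {a, t} ∈ M)
    (hBtu : B ∆ {t, u} ∈ M) :
    B ∆ {a, u} ∈ M ∧
      ∃ z ∈ ((A ∆ B).erase a).erase t, A ∆ {a, z} ∈ M ∧ B ∆ {t, z} ∈ M := by
  obtain ⟨hta, htD⟩ := mem_erase.1 ht
  obtain ⟨hut, hua, huD⟩ : u ≠ t ∧ u ≠ a ∧ u ∈ A ∆ B := by simpa using hu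
  have hD : A ∆ (B ∆ {t, u}) = (A ∆ B) ∆ {t, u} := (symmDiff_assoc A B _).symm
  obtain ⟨z, hz, hAz, hB'z⟩ := IH A _ (hD ▸ card_symmDiff_pair_lt htD huD) hA hBtu a
    (by simp [hD, mem_symmDiff, ha, hta.symm, hua.symm])
  obtain ⟨hza, hzD, hzt, hzu⟩ : z ≠ a ∧ z ∈ A ∆ B ∧ z ≠ t ∧ z ≠ u := by
    rw [hD, mem_erase, mem_symmDiff] at hz
    simp only [mem_insert, mem_singleton] at hz
    grind
  rw [symmDiff_assoc] at hB'z
  obtain ⟨w, hw, hB'w, hBw⟩ := IH _ B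
    (by
      rw [symmDiff_symmDiff_self']
      exact (card_symmDiff_le _ _).trans (add_le_add card_le_two card_le_two) |>.trans_lt hd)
    hB'z hB a (by simp [symmDiff_symmDiff_self', mem_symmDiff, hta.symm, hua.symm])
  obtain ⟨hwa, rfl | rfl | rfl⟩ : w ≠ a ∧ (w = t ∨ w = u ∨ w = z) := by
    simp only [symmDiff_symmDiff_self', mem_erase, mem_symmDiff, mem_insert,
      mem_singleton] at hw
    grind
  · exact absurd ⟨w, ht, hAt, hBw⟩ hnot
  · refine ⟨hBw, z, by simp [hza, hzt, hzD], hAz, ?_⟩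
    convert hB'w using 1
    rw [symmDiff_assoc]
    congr 1
    ext x
    simp only [mem_symmDiff, mem_insert, mem_singleton]
    grind
  · exact absurd ⟨w, mem_erase.2 ⟨hza, hzD⟩, hAz, hBw⟩ hnot

theorem IsEvenSetSystem.hasWenzelExchange (hE : IsEvenSetSystem M)
    (hX : HasSymmetricExchange M) : HasWenzelExchange M := by
  intro A hA B hB
  induction A, B using induction_on_card_symmDiff with
  | ind A B IH =>
  intro a ha
  by_contra hnot
  obtain ⟨b, hb, hAb⟩ := hX.exists_ne hE hA hB ha
  obtain ⟨s, hs, hBs⟩ := hX.exists_ne hE hB hA (symmDiff_comm A B ▸ mem_of_mem_erase hb)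
  rw [symmDiff_comm] at hs
  have hsa : s ≠ a := by
    rintro rfl
    exact hnot ⟨b, hb, hAb, pair_comm s b ▸ hBs⟩
  have hs' : s ∈ ((A ∆ B).erase a).erase b :=
    mem_erase.2 ⟨ne_of_mem_erase hs, mem_erase.2 ⟨hsa, mem_of_mem_erase hs⟩⟩
  have h2 : 2 < #(A ∆ B) := two_lt_card.2 ⟨a, ha, b, mem_of_mem_erase hb, s,
    mem_of_mem_erase hs, (ne_of_mem_erase hb).symm, hsa.symm, (ne_of_mem_erase hs).symm⟩
  have heven := hE.even_card_symmDiff hA hB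
  obtain h4 | h4 : #(A ∆ B) = 4 ∨ 4 < #(A ∆ B) := by rw [Nat.even_iff] at heven; omega
  · exact hnot (wenzelExchangeAt_of_card_eq_four hX hE h4 hA hB ha hb hs' hAb hBs)
  · obtain ⟨-, z, hz, hAz, hBz⟩ :=
      symmDiff_pair_mem_of_not_wenzelExchangeAt IH h4 hA hB ha hnot hb hs' hAb hBs
    exact hnot ⟨z, mem_of_mem_erase hz, hAz,
      (symmDiff_pair_mem_of_not_wenzelExchangeAt IH h4 hA hB ha hnot hb hz hAb hBz).1⟩

end Wenzel

/-- For a set system on `[n]`, the following are equivalent: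
being an even Δ-matroid, the strong exchange property for even Δ-matroids,
and Wenzel's exchange property. -/
theorem even_delta_matroid_tfae
    {n : ℕ} (M : Finset (Finset (Fin n))) :
    [ (∀ A ∈ M, ∀ B ∈ M, A.card % 2 = B.card % 2) ∧ SymmetricExchange M,
      ∀ A ∈ M, ∀ B ∈ M, A ≠ B → ∃ a ∈ A ∆ B, ∃ b ∈ A ∆ B, a ≠ b ∧
        A ∆ {a, b} ∈ M ∧ B ∆ {a, b} ∈ M,
      ∀ A ∈ M, ∀ B ∈ M, ∀ a ∈ A ∆ B, ∃ b ∈ (A ∆ B).erase a,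
        A ∆ {a, b} ∈ M ∧ B ∆ {a, b} ∈ M ].TFAE := by
  tfae_have 1 → 3 := fun ⟨hE, hX⟩ =>
    IsEvenSetSystem.hasWenzelExchange (M := (M : Set (Finset (Fin n)))) hE hX
  tfae_have 3 → 2 := HasWenzelExchange.hasStrongExchange (M := (M : Set (Finset (Fin n))))
  tfae_have 2 → 1 := fun h =>
    ⟨HasStrongExchange.isEvenSetSystem (M := (M : Set (Finset (Fin n)))) h,
      HasStrongExchange.hasSymmetricExchange h⟩
  tfae_finish
end

section
/- Work in ℝ^n with the standard inner product ⟨·,·⟩ and standard basis e_1,…,e_n, and let V = {e_i : 1 ≤ i ≤ n} ∪ {−e_i : 1 ≤ i ≤ n}. Let Φ_D = {ε·e_i + δ·e_j : 1 ≤ i < j ≤ n, ε, δ ∈ {1,−1}} be the set of D_n roots, and for nonzero α let r_α(x) = x − (2⟨x,α⟩/⟨α,α⟩)·α. Let M ⊆ V. Then M satisfies the strong exchange property with respect to Φ_D — that is, for all u, v ∈ M with u ≠ v there exists α ∈ Φ_D with ⟨u,α⟩·⟨v,α⟩ < 0, r_α(u) ∈ M and r_α(v) ∈ M — if and only if the number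 of indices i ∈ {1,…,n} with both e_i ∈ M and −e_i ∈ M is not equal to 1. -/
/-- The `i`-th standard basis vector of `ℝ^n`. -/
noncomputable def stdVec (n : ℕ) (i : Fin n) : EuclideanSpace ℝ (Fin n) :=
  EuclideanSpace.single i 1

/-- The vertex set of the `n`-dimensional cross polytope. -/
def crossVerts (n : ℕ) : Set (EuclideanSpace ℝ (Fin n)) :=
  {v | ∃ i : Fin n, v = stdVec n i ∨ v = -stdVec n i}

/-- The root system of type `D_n`. -/
def PhiD (n : ℕ) : Set (EuclideanSpace ℝ (Fin n)) :=
  {α | ∃ i j : Fin n, i ≠ j ∧ ∃ ε δ : ℝ, (ε = 1 ∨ ε = -1) ∧ (δ = 1 ∨ δ = -1) ∧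
    α = ε • stdVec n i + δ • stdVec n j}

/-- The reflection in the hyperplane orthogonal to `α`. -/
noncomputable def reflVec {n : ℕ} (α x : EuclideanSpace ℝ (Fin n)) :
    EuclideanSpace ℝ (Fin n) :=
  x - (2 * (inner ℝ x α : ℝ) / (inner ℝ α α : ℝ)) • α

lemma inner_stdVec {n : ℕ} (i j : Fin n) :
    (inner ℝ (stdVec n i) (stdVec n j) : ℝ) = if j = i then 1 else 0 := by
  simp [stdVec, EuclideanSpace.inner_single_left, EuclideanSpace.single_apply, eq_comm]

lemma inner_rep_same {n : ℕ} (σ ε δ : ℝ) {k j : Fin n} (hkj : k ≠ j) :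
    (inner ℝ (σ • stdVec n k) (ε • stdVec n k + δ • stdVec n j) : ℝ) = σ * ε := by
  simp only [inner_add_right, real_inner_smul_left, real_inner_smul_right, inner_stdVec,
    if_neg (Ne.symm hkj), eq_self_iff_true, if_true]
  ring

lemma inner_rep_other {n : ℕ} (σ ε δ : ℝ) {i k : Fin n} (hik : i ≠ k) :
    (inner ℝ (σ • stdVec n k) (ε • stdVec n i + δ • stdVec n k) : ℝ) = σ * δ := by
  simp only [inner_add_right, real_inner_smul_left, real_inner_smul_right, inner_stdVec,
    if_neg hik, eq_self_iff_true, if_true]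
  ring

lemma inner_rep_none {n : ℕ} (σ ε δ : ℝ) {i j k : Fin n} (hik : i ≠ k) (hjk : j ≠ k) :
    (inner ℝ (σ • stdVec n k) (ε • stdVec n i + δ • stdVec n j) : ℝ) = 0 := by
  simp only [inner_add_right, real_inner_smul_left, real_inner_smul_right, inner_stdVec,
    if_neg hik, if_neg hjk]
  ring

lemma inner_root_self {n : ℕ} {i j : Fin n} (hij : i ≠ j) {ε δ : ℝ}
    (hε2 : ε * ε = 1) (hδ2 : δ * δ = 1) :
    (inner ℝ (ε • stdVec n i + δ • stdVec n j) (ε • stdVec n i + δ • stdVec n j) : ℝ) = 2 := by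
  simp only [inner_add_left, inner_add_right, real_inner_smul_left, real_inner_smul_right,
    inner_stdVec, if_neg hij, if_neg (Ne.symm hij), eq_self_iff_true, if_true]
  linear_combination hε2 + hδ2

lemma reflVec_root_left {n : ℕ} {i j : Fin n} (hij : i ≠ j) {ε δ : ℝ}
    (hε2 : ε * ε = 1) (hδ2 : δ * δ = 1) (σ : ℝ) :
    reflVec (ε • stdVec n i + δ • stdVec n j) (σ • stdVec n i)
      = (-(σ * ε * δ)) • stdVec n j := by
  unfold reflVec
  rw [inner_root_self hij hε2 hδ2, inner_rep_same σ ε δ hij,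
    show 2 * (σ * ε) / 2 = σ * ε by ring]
  match_scalars
  · linear_combination -σ * hε2
  · ring

lemma reflVec_root_right {n : ℕ} {i j : Fin n} (hij : i ≠ j) {ε δ : ℝ}
    (hε2 : ε * ε = 1) (hδ2 : δ * δ = 1) (σ : ℝ) :
    reflVec (ε • stdVec n i + δ • stdVec n j) (σ • stdVec n j)
      = (-(σ * ε * δ)) • stdVec n i := by
  rw [add_comm (ε • stdVec n i), reflVec_root_left (Ne.symm hij) hδ2 hε2 σ,
    show -(σ * δ * ε) = -(σ * ε * δ) by ring]

lemma pair_mem {n : ℕ} {M : Set (EuclideanSpace ℝ (Fin n))} {c : ℝ} (hc : c = 1 ∨ c = -1)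
    {x : EuclideanSpace ℝ (Fin n)} (h1 : c • x ∈ M) (h2 : (-c) • x ∈ M) :
    x ∈ M ∧ -x ∈ M := by
  rcases hc with rfl | rfl
  · rw [one_smul] at h1
    rw [neg_one_smul] at h2
    exact ⟨h1, h2⟩
  · rw [neg_one_smul] at h1
    rw [neg_neg, one_smul] at h2
    exact ⟨h2, h1⟩

lemma mem_of_pair {n : ℕ} {M : Set (EuclideanSpace ℝ (Fin n))} {c : ℝ} (hc : c = 1 ∨ c = -1)
    {x : EuclideanSpace ℝ (Fin n)} (h : x ∈ M ∧ -x ∈ M) : c • x ∈ M := by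
  rcases hc with rfl | rfl
  · rw [one_smul]; exact h.1
  · rw [neg_one_smul]; exact h.2

lemma exists_rep {n : ℕ} {u : EuclideanSpace ℝ (Fin n)} (hu : u ∈ crossVerts n) :
    ∃ k : Fin n, ∃ σ : ℝ, (σ = 1 ∨ σ = -1) ∧ u = σ • stdVec n k := by
  obtain ⟨k, hk | hk⟩ := hu
  · exact ⟨k, 1, Or.inl rfl, by rw [hk, one_smul]⟩
  · exact ⟨k, -1, Or.inr rfl, by rw [hk, neg_one_smul]⟩

lemma stdVec_ne_neg {n : ℕ} (k : Fin n) : stdVec n k ≠ -stdVec n k := by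
  intro h
  have h2 : stdVec n k k = (-stdVec n k) k := by rw [← h]
  simp [stdVec, EuclideanSpace.single_apply] at h2
  norm_num at h2

/-- A subset of the cross polytope vertices satisfies the strong exchange
property with respect to the `D_n` roots iff the number of antipodal pairs it contains is
not exactly one. -/
theorem crossPolytope_Dn_strong_exchange_iff
    {n : ℕ} (M : Set (EuclideanSpace ℝ (Fin n))) (hM : M ⊆ crossVerts n) :
    (∀ u ∈ M, ∀ v ∈ M, u ≠ v → ∃ α ∈ PhiD n,
      (inner ℝ u α : ℝ) * (inner ℝ v α : ℝ) < 0 ∧ reflVec α u ∈ M ∧ reflVec α v ∈ M)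
    ↔ {i : Fin n | stdVec n i ∈ M ∧ -stdVec n i ∈ M}.ncard ≠ 1 := by
  set S := {i : Fin n | stdVec n i ∈ M ∧ -stdVec n i ∈ M} with hS
  constructor
  · intro hSEP h1
    rw [Set.ncard_eq_one] at h1
    obtain ⟨k, hk⟩ := h1
    have hkS : k ∈ S := by rw [hk]; exact rfl
    obtain ⟨hek, hnek⟩ := hkS
    have hek' : (1:ℝ) • stdVec n k ∈ M := by rw [one_smul]; exact hek
    have hnek' : (-1:ℝ) • stdVec n k ∈ M := by rw [neg_one_smul]; exact hnek
    have hne : (1:ℝ) • stdVec n k ≠ (-1:ℝ) • stdVec n k := by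
      rw [one_smul, neg_one_smul]; exact stdVec_ne_neg k
    obtain ⟨α, ⟨i, j, hij, ε, δ, hε, hδ, rfl⟩, hlt, hrU, hrV⟩ := hSEP _ hek' _ hnek' hne
    have hε2 : ε * ε = 1 := by rcases hε with rfl | rfl <;> norm_num
    have hδ2 : δ * δ = 1 := by rcases hδ with rfl | rfl <;> norm_num
    have hc : -((1:ℝ) * ε * δ) = 1 ∨ -((1:ℝ) * ε * δ) = -1 := by
      rcases hε with rfl | rfl <;> rcases hδ with rfl | rfl <;> norm_num
    have hki : k = i ∨ k = j := by
      by_contra hcon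
      push_neg at hcon
      rw [inner_rep_none _ _ _ (Ne.symm hcon.1) (Ne.symm hcon.2),
        inner_rep_none _ _ _ (Ne.symm hcon.1) (Ne.symm hcon.2)] at hlt
      norm_num at hlt
    rcases hki with rfl | rfl
    · rw [reflVec_root_left hij hε2 hδ2] at hrU
      rw [reflVec_root_left hij hε2 hδ2,
        show -((-1:ℝ) * ε * δ) = -(-((1:ℝ) * ε * δ)) by ring] at hrV
      have hjS : j ∈ S := pair_mem hc hrU hrV
      rw [hk, Set.mem_singleton_iff] at hjS
      exact hij hjS.symm
    · rw [reflVec_root_right hij hε2 hδ2] at hrU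
      rw [reflVec_root_right hij hε2 hδ2,
        show -((-1:ℝ) * ε * δ) = -(-((1:ℝ) * ε * δ)) by ring] at hrV
      have hiS : i ∈ S := pair_mem hc hrU hrV
      rw [hk, Set.mem_singleton_iff] at hiS
      exact hij hiS
  · intro hc u hu v hv huv
    obtain ⟨k, σ, hσ, rfl⟩ := exists_rep (hM hu)
    obtain ⟨l, τ, hτ, rfl⟩ := exists_rep (hM hv)
    have hσ2 : σ * σ = 1 := by rcases hσ with rfl | rfl <;> norm_num
    have hτ2 : τ * τ = 1 := by rcases hτ with rfl | rfl <;> norm_num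
    by_cases hkl : k = l
    · subst hkl
      have hτσ : τ = -σ := by
        rcases hσ with rfl | rfl <;> rcases hτ with rfl | rfl <;>
          first | (exact absurd rfl huv) | norm_num
      subst hτσ
      have hkS : k ∈ S := pair_mem hσ hu hv
      have h0 : 0 < S.ncard := (Set.ncard_pos (Set.toFinite _)).mpr ⟨k, hkS⟩
      have h1 : 1 < S.ncard := by omega
      obtain ⟨j, hjS, hjk⟩ := Set.exists_ne_of_one_lt_ncard h1 k
      have hkj : k ≠ j := Ne.symm hjk
      refine ⟨(1:ℝ) • stdVec n k + (1:ℝ) • stdVec n j,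
        ⟨k, j, hkj, 1, 1, Or.inl rfl, Or.inl rfl, rfl⟩, ?_, ?_, ?_⟩
      · rw [inner_rep_same _ _ _ hkj, inner_rep_same _ _ _ hkj]
        nlinarith [hσ2]
      · rw [reflVec_root_left hkj (by norm_num) (by norm_num)]
        exact mem_of_pair (by rcases hσ with rfl | rfl <;> norm_num) hjS
      · rw [reflVec_root_left hkj (by norm_num) (by norm_num)]
        exact mem_of_pair (by rcases hσ with rfl | rfl <;> norm_num) hjS
    · have hτ' : -τ = 1 ∨ -τ = -1 := by rcases hτ with rfl | rfl <;> norm_num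
      have hτ2' : -τ * -τ = 1 := by nlinarith [hτ2]
      refine ⟨σ • stdVec n k + (-τ) • stdVec n l,
        ⟨k, l, hkl, σ, -τ, hσ, hτ', rfl⟩, ?_, ?_, ?_⟩
      · rw [inner_rep_same _ _ _ hkl, inner_rep_other _ _ _ hkl]
        nlinarith [hσ2, hτ2]
      · rw [reflVec_root_left hkl hσ2 hτ2',
          show -(σ * σ * -τ) = τ by linear_combination τ * hσ2]
        exact hv
      · rw [reflVec_root_right hkl hσ2 hτ2',
          show -(τ * σ * -τ) = σ by linear_combination σ * hτ2]
        exact hu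
end

section
/- Let m, a be natural numbers with m ≥ 3 and a ≤ m, and let c be an integer. Define, for each natural number b, χ_b = Σ_{k=0}^{b} (−1)^k · C(a,k) · C(m−a, b−k) ∈ ℤ, where C denotes the binomial coefficient. Then Σ_{b=0, b ≡ c (mod 2)}^{m} (c − b)·χ_b equals (2c − m)·2^{m−2} if a = 0, equals 2^{m−2} if a = 1, and equals 0 if 2 ≤ a and 2 ≤ m − a. -/
open Finset

/-- The signed convolution of binomial coefficients
`χ_b = Σ_{k=0}^{b} (−1)^k C(a,k) C(m−a, b−k)`. -/
def chi (m a b : ℕ) : ℤ :=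
  ∑ k ∈ Finset.range (b + 1),
    (-1 : ℤ) ^ k * (a.choose k : ℤ) * ((m - a).choose (b - k) : ℤ)

lemma sum_j_choose (n : ℕ) :
    ∑ j ∈ range (n + 1), (j : ℤ) * (n.choose j : ℤ) = n * 2 ^ (n - 1) := by
  cases n with
  | zero => simp
  | succ t =>
    rw [Finset.sum_range_succ' (fun j => (j : ℤ) * ((t+1).choose j : ℤ))]
    have : ∀ i ∈ range (t + 1), ((i:ℤ)+1) * ((t+1).choose (i+1) : ℤ)
        = (t+1) * (t.choose i : ℤ) := by
      intro i _
      have h := Nat.add_one_mul_choose_eq t i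
      have : ((t+1) * t.choose i : ℤ) = ((t+1).choose (i+1) : ℤ) * (i+1) := by
        exact_mod_cast congrArg (Nat.cast : ℕ → ℤ) h
      linarith [this]
    simp only [Nat.cast_add, Nat.cast_one] at this ⊢
    rw [Finset.sum_congr rfl this]
    rw [← Finset.mul_sum]
    have := Nat.sum_range_choose t
    have h2 : (∑ i ∈ range (t+1), (t.choose i : ℤ)) = 2 ^ t := by
      exact_mod_cast congrArg (Nat.cast : ℕ → ℤ) this
    simp [h2]

lemma alt_sum_j_choose (n : ℕ) (hn : 2 ≤ n) :
    ∑ j ∈ range (n + 1), (-1:ℤ)^j * (j : ℤ) * (n.choose j : ℤ) = 0 := by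
  obtain ⟨t, rfl⟩ : ∃ t, n = t + 1 := ⟨n - 1, by omega⟩
  rw [Finset.sum_range_succ' (fun j => (-1:ℤ)^j * (j : ℤ) * ((t+1).choose j : ℤ))]
  have : ∀ i ∈ range (t + 1), (-1:ℤ)^(i+1) * ((i:ℤ)+1) * ((t+1).choose (i+1) : ℤ)
      = (-(t+1)) * ((-1:ℤ)^i * (t.choose i : ℤ)) := by
    intro i _
    have h := Nat.add_one_mul_choose_eq t i
    have h2 : ((t+1) * t.choose i : ℤ) = ((t+1).choose (i+1) : ℤ) * (i+1) := by
      exact_mod_cast congrArg (Nat.cast : ℕ → ℤ) h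
    rw [pow_succ]
    linear_combination ((-1:ℤ)^i) * h2
  simp only [Nat.cast_add, Nat.cast_one] at this ⊢
  rw [Finset.sum_congr rfl this, ← Finset.mul_sum]
  rw [Int.alternating_sum_range_choose_of_ne (by omega : t ≠ 0)]
  simp

lemma swap_sum (m a : ℕ) (ha : a ≤ m) (g : ℕ → ℤ) :
    ∑ b ∈ range (m + 1), g b * chi m a b
    = ∑ k ∈ range (a + 1), (-1:ℤ)^k * (a.choose k : ℤ) *
        ∑ j ∈ range (m - a + 1), g (k + j) * ((m - a).choose j : ℤ) := by
  unfold chi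
  simp only [Finset.mul_sum]
  rw [Finset.sum_comm' (t' := range (m + 1)) (s' := fun k => Finset.Icc k m)
    (by intro b k; simp only [mem_range, mem_Icc]; omega)]
  have step1 : ∀ k ∈ range (m + 1),
      (∑ b ∈ Icc k m, g b * ((-1:ℤ)^k * (a.choose k : ℤ) * ((m - a).choose (b - k) : ℤ)))
      = ∑ j ∈ range (m + 1 - k), g (k + j) * ((-1:ℤ)^k * (a.choose k : ℤ) * ((m - a).choose j : ℤ)) := by
    intro k _
    rw [← Finset.Ico_add_one_right_eq_Icc, Finset.sum_Ico_eq_sum_range]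
    apply Finset.sum_congr rfl
    intro j _
    rw [Nat.add_sub_cancel_left]
  rw [Finset.sum_congr rfl step1]
  rw [← Finset.sum_subset (Finset.range_subset_range.2 (by omega : a + 1 ≤ m + 1))
    (by intro k _ hk
        simp only [mem_range, not_lt] at hk
        have : a.choose k = 0 := Nat.choose_eq_zero_of_lt (by omega)
        simp [this])]
  apply Finset.sum_congr rfl
  intro k hk
  simp only [mem_range] at hk
  rw [← Finset.sum_subset (Finset.range_subset_range.2 (by omega : m - a + 1 ≤ m + 1 - k))
    (by intro j _ hj
        simp only [mem_range, not_lt] at hj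
        have : (m - a).choose j = 0 := Nat.choose_eq_zero_of_lt (by omega)
        simp [this])]
  apply Finset.sum_congr rfl
  intro j _
  ring

lemma inner_eval (n : ℕ) (x : ℤ) :
    ∑ j ∈ range (n + 1), (x - (j:ℤ)) * (n.choose j : ℤ) = x * 2 ^ n - n * 2 ^ (n - 1) := by
  simp only [sub_mul]
  rw [Finset.sum_sub_distrib, ← Finset.mul_sum]
  have h2 : (∑ j ∈ range (n+1), (n.choose j : ℤ)) = 2 ^ n := by
    exact_mod_cast congrArg (Nat.cast : ℕ → ℤ) (Nat.sum_range_choose n)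
  rw [h2, sum_j_choose]

lemma inner_alt_eval (n : ℕ) (hn : 2 ≤ n) (x : ℤ) :
    ∑ j ∈ range (n + 1), (-1:ℤ)^j * (x - (j:ℤ)) * (n.choose j : ℤ) = 0 := by
  have step : ∀ j ∈ range (n + 1), (-1:ℤ)^j * (x - (j:ℤ)) * (n.choose j : ℤ)
      = x * ((-1:ℤ)^j * (n.choose j : ℤ)) - (-1:ℤ)^j * (j:ℤ) * (n.choose j : ℤ) := by
    intro j _; ring
  rw [Finset.sum_congr rfl step, Finset.sum_sub_distrib, ← Finset.mul_sum]
  rw [Int.alternating_sum_range_choose_of_ne (by omega : n ≠ 0), alt_sum_j_choose n hn]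
  simp

/-- Evaluation of `Σ_{b ≡ c (2), 0 ≤ b ≤ m} (c − b)·χ_b`. -/
theorem chi_weighted_sum_eval (m a : ℕ) (hm : 3 ≤ m) (ha : a ≤ m) (c : ℤ) :
    (a = 0 →
      ∑ b ∈ (Finset.range (m + 1)).filter (fun b : ℕ => (c - (b : ℤ)) % 2 = 0),
          (c - (b : ℤ)) * chi m a b
        = (2 * c - (m : ℤ)) * 2 ^ (m - 2)) ∧
    (a = 1 →
      ∑ b ∈ (Finset.range (m + 1)).filter (fun b : ℕ => (c - (b : ℤ)) % 2 = 0),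
          (c - (b : ℤ)) * chi m a b
        = 2 ^ (m - 2)) ∧
    (2 ≤ a → 2 ≤ m - a →
      ∑ b ∈ (Finset.range (m + 1)).filter (fun b : ℕ => (c - (b : ℤ)) % 2 = 0),
          (c - (b : ℤ)) * chi m a b
        = 0) := by
  set S := ∑ b ∈ (Finset.range (m + 1)).filter (fun b : ℕ => (c - (b : ℤ)) % 2 = 0),
      (c - (b : ℤ)) * chi m a b with hS
  set ε : ℤ := if Even c then 1 else -1 with hε
  -- parity combination
  have parity : ∑ b ∈ range (m + 1), (1 + ε * (-1:ℤ)^b) * ((c - (b:ℤ)) * chi m a b)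
      = 2 * S := by
    rw [hS, ← Finset.sum_filter_add_sum_filter_not (range (m + 1))
      (fun b : ℕ => (c - (b : ℤ)) % 2 = 0)]
    have hyes : ∀ b ∈ (range (m+1)).filter (fun b : ℕ => (c - (b : ℤ)) % 2 = 0),
        (1 + ε * (-1:ℤ)^b) * ((c - (b:ℤ)) * chi m a b)
        = 2 * ((c - (b:ℤ)) * chi m a b) := by
      intro b hb
      simp only [mem_filter] at hb
      have heven : Even (c - (b:ℤ)) := Int.even_iff.2 hb.2
      have hpar : Even c ↔ Even (b:ℤ) := Int.even_sub.1 heven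
      have : ε * (-1:ℤ)^b = 1 := by
        rcases Int.even_or_odd c with hc | hc
        · have hb' : Even b := by
            have := hpar.1 hc
            exact (Int.even_coe_nat b).1 this
          rw [hε, if_pos hc, hb'.neg_one_pow]; ring
        · have hb' : Odd b := by
            rw [← Nat.not_even_iff_odd]
            intro h
            exact (Int.not_even_iff_odd.2 hc) (hpar.2 ((Int.even_coe_nat b).2 h))
          rw [hε, if_neg (Int.not_even_iff_odd.2 hc), hb'.neg_one_pow]
          ring
      rw [this]; ring
    have hno : ∀ b ∈ (range (m+1)).filter (fun b : ℕ => ¬ (c - (b : ℤ)) % 2 = 0),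
        (1 + ε * (-1:ℤ)^b) * ((c - (b:ℤ)) * chi m a b) = 0 := by
      intro b hb
      simp only [mem_filter] at hb
      have hodd : Odd (c - (b:ℤ)) := Int.odd_iff.2 (by omega)
      have hpar : ¬ (Even c ↔ Even (b:ℤ)) := by
        intro h
        exact (Int.not_even_iff_odd.2 hodd) (Int.even_sub.2 h)
      have : ε * (-1:ℤ)^b = -1 := by
        rcases Int.even_or_odd c with hc | hc
        · have hb' : ¬ Even b := by
            intro h
            exact hpar ⟨fun _ => (Int.even_coe_nat b).2 h, fun _ => hc⟩
          rw [hε, if_pos hc, (Nat.not_even_iff_odd.1 hb').neg_one_pow]; ring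
        · have hb' : Even b := by
            by_contra h
            exact hpar ⟨fun h2 => absurd h2 (Int.not_even_iff_odd.2 hc),
              fun h2 => absurd ((Int.even_coe_nat b).1 h2) h⟩
          rw [hε, if_neg (Int.not_even_iff_odd.2 hc), hb'.neg_one_pow]; ring
      rw [this]; ring
    rw [Finset.sum_congr rfl hyes, Finset.sum_congr rfl hno, Finset.sum_const_zero,
      add_zero, ← Finset.mul_sum]
  -- main evaluation under 2 ≤ m - a
  have key : 2 ≤ m - a →
      2 * S = ∑ k ∈ range (a + 1), (-1:ℤ)^k * (a.choose k : ℤ) *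
        ((c - (k:ℤ)) * 2 ^ (m - a) - (m - a : ℕ) * 2 ^ (m - a - 1)) := by
    intro hma
    have split : ∀ b ∈ range (m + 1),
        (1 + ε * (-1:ℤ)^b) * ((c - (b:ℤ)) * chi m a b)
        = (c - (b:ℤ)) * chi m a b + ε * (((-1:ℤ)^b * (c - (b:ℤ))) * chi m a b) := by
      intro b _; ring
    rw [← parity, Finset.sum_congr rfl split, Finset.sum_add_distrib, ← Finset.mul_sum]
    have hT1 := swap_sum m a ha (fun b => c - (b:ℤ))
    have hT2 := swap_sum m a ha (fun b => (-1:ℤ)^b * (c - (b:ℤ)))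
    rw [hT1, hT2]
    have hT2z : (∑ k ∈ range (a + 1), (-1:ℤ)^k * (a.choose k : ℤ) *
        ∑ j ∈ range (m - a + 1), ((-1:ℤ)^(k + j) * (c - ((k + j : ℕ):ℤ))) * ((m - a).choose j : ℤ)) = 0 := by
      apply Finset.sum_eq_zero
      intro k _
      have inner0 : (∑ j ∈ range (m - a + 1),
          ((-1:ℤ)^(k + j) * (c - ((k + j : ℕ):ℤ))) * ((m - a).choose j : ℤ)) = 0 := by
        have step : ∀ j ∈ range (m - a + 1),
            ((-1:ℤ)^(k + j) * (c - ((k + j : ℕ):ℤ))) * ((m - a).choose j : ℤ)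
            = (-1:ℤ)^k * ((-1:ℤ)^j * ((c - (k:ℤ)) - (j:ℤ)) * ((m - a).choose j : ℤ)) := by
          intro j _
          push_cast
          rw [pow_add]
          ring
        rw [Finset.sum_congr rfl step, ← Finset.mul_sum, inner_alt_eval (m - a) hma (c - k)]
        simp
      rw [inner0, mul_zero]
    rw [hT2z, mul_zero, add_zero]
    apply Finset.sum_congr rfl
    intro k _
    congr 1
    have step : ∀ j ∈ range (m - a + 1),
        (c - ((k + j : ℕ):ℤ)) * ((m - a).choose j : ℤ)
        = ((c - (k:ℤ)) - (j:ℤ)) * ((m - a).choose j : ℤ) := by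
      intro j _; push_cast; ring
    rw [Finset.sum_congr rfl step, inner_eval (m - a) (c - k)]
  obtain ⟨e, rfl⟩ : ∃ e, m = e + 3 := ⟨m - 3, by omega⟩
  refine ⟨?_, ?_, ?_⟩
  · rintro rfl
    have hk := key (by omega)
    rw [(by omega : (e + 3 - 0 - 1 : ℕ) = e + 2)] at hk
    rw [(by omega : (e + 3 - 0 : ℕ) = e + 3)] at hk
    simp only [show (0 + 1 : ℕ) = 1 from rfl, Finset.sum_range_one] at hk
    have goal2 : 2 * S = 2 * ((2 * c - ((e + 3 : ℕ) : ℤ)) * 2 ^ (e + 3 - 2)) := by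
      rw [hk, (by omega : (e + 3 - 2 : ℕ) = e + 1)]
      simp only [Nat.choose_self, Nat.cast_one]
      push_cast
      ring
    exact mul_left_cancel₀ two_ne_zero goal2
  · rintro rfl
    have hk := key (by omega)
    rw [(by omega : (e + 3 - 1 - 1 : ℕ) = e + 1)] at hk
    rw [(by omega : (e + 3 - 1 : ℕ) = e + 2)] at hk
    rw [Finset.sum_range_succ, Finset.sum_range_one] at hk
    have goal2 : 2 * S = 2 * (2 ^ (e + 3 - 2)) := by
      rw [hk, (by omega : (e + 3 - 2 : ℕ) = e + 1)]
      norm_num [Nat.choose]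
      push_cast
      ring
    exact mul_left_cancel₀ two_ne_zero goal2
  · intro ha2 hma2
    have hk := key hma2
    have zero1 : (∑ k ∈ range (a + 1), (-1:ℤ)^k * (a.choose k : ℤ) *
        ((c - (k:ℤ)) * 2 ^ (e + 3 - a) - ((e + 3 - a : ℕ) : ℤ) * 2 ^ (e + 3 - a - 1))) = 0 := by
      have step : ∀ k ∈ range (a + 1),
          (-1:ℤ)^k * (a.choose k : ℤ) *
            ((c - (k:ℤ)) * 2 ^ (e + 3 - a) - ((e + 3 - a : ℕ) : ℤ) * 2 ^ (e + 3 - a - 1))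
          = (c * 2 ^ (e + 3 - a) - ((e + 3 - a : ℕ) : ℤ) * 2 ^ (e + 3 - a - 1)) *
              ((-1:ℤ)^k * (a.choose k : ℤ))
            - 2 ^ (e + 3 - a) * ((-1:ℤ)^k * (k:ℤ) * (a.choose k : ℤ)) := by
        intro k _; ring
      rw [Finset.sum_congr rfl step, Finset.sum_sub_distrib, ← Finset.mul_sum, ← Finset.mul_sum]
      rw [Int.alternating_sum_range_choose_of_ne (by omega : a ≠ 0), alt_sum_j_choose a ha2]
      simp
    rw [zero1] at hk
    have : (2:ℤ) * S = 2 * 0 := by rw [hk]; ring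
    exact mul_left_cancel₀ two_ne_zero this
end

section
/- Fix n ∈ ℕ and work in the polynomial ring R over ℂ with one variable X_A for each subset A ⊆ [n]. For every subset S ⊆ [n], the polynomial ex_{(∅,S)} = Σ_{i∈S} (−1)^{ℓ(i,∅) + ℓ(i,S)} X_{{i}} X_{S∖{i}} − (X_∅ X_S if |S| is odd, else 0) lies in the ℂ-linear span of the set of polynomials { p^M_{∅, [n]∖S} : M ⊆ S and 2|M| ∈ 𝓜_{∅, [n]∖S} }. -/
open scoped symmDiff
open MvPolynomial

/-- `inv(A,B)`: the number of pairs `(a,b) ∈ A × B` with `a > b`. -/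
def invCount {n : ℕ} (A B : Finset (Fin n)) : ℕ :=
  ((A ×ˢ B).filter (fun p => p.2 < p.1)).card

/-- `ℓ(i,A)`: the number of elements of `A` smaller than `i`. -/
def low {n : ℕ} (i : Fin n) (A : Finset (Fin n)) : ℕ :=
  (A.filter (fun a => a < i)).card

/-- The sign exponent `[K, K̄]` attached to the ordered antipode `(K, K Δ S)` of the
subcube `Q_{N,L}`, where `S = [n] ∖ (N ∪ L)` and complements are taken in `[n]`. -/
def signExp {n : ℕ} (N L K : Finset (Fin n)) : ℕ :=
  (K ∆ (N ∪ L)ᶜ)ᶜ.card * (N.card + L.card)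
    + Nat.choose (K ∆ (N ∪ L)ᶜ)ᶜ.card 2
    + invCount (K ∆ (N ∪ L)ᶜ)ᶜ (K ∆ (N ∪ L)ᶜ)
    + n * (K ∆ (N ∪ L)ᶜ).card
    + invCount L (K \ N)
    + Nat.choose N.card 2
    + invCount N (K \ N)

/-- The quadratic embedding equation `ex_{(K, K̄)}` of the antipode `(K, K Δ S)` of the
subcube `Q_{N,L}`, where `S = [n] ∖ (N ∪ L)`, as a polynomial in variables `X_A`,
`A ⊆ [n]`. -/
noncomputable def exEq (n : ℕ) (N L K : Finset (Fin n)) :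
    MvPolynomial (Finset (Fin n)) ℂ :=
  (∑ i ∈ ((N ∪ L)ᶜ : Finset (Fin n)),
      ((-1 : ℂ) ^ (low i K + low i (K ∆ (N ∪ L)ᶜ))) •
        (X (K ∆ {i}) * X ((K ∆ (N ∪ L)ᶜ) ∆ {i})))
  - (if Odd ((N ∪ L)ᶜ : Finset (Fin n)).card then X K * X (K ∆ (N ∪ L)ᶜ) else 0)

/-- The Lichtenstein embedding equation `p^M_{N,L}`. -/
noncomputable def pEq (n : ℕ) (N L M : Finset (Fin n)) :
    MvPolynomial (Finset (Fin n)) ℂ :=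
  ∑ K ∈ (Finset.univ : Finset (Finset (Fin n))).filter
      (fun K => N ⊆ K ∧ Disjoint K L),
    ((-1 : ℂ) ^ ((Kᶜ ∩ M).card + signExp N L K)) • (X K * X (K ∆ (N ∪ L)ᶜ))

/-- The admissible set `𝓜_{N,L}` of values of `2|M|`. -/
def admissible (n : ℕ) {m : ℕ} (N L : Finset (Fin m)) : Set ℤ :=
  {x | (∃ k : ℤ, ∃ ε : ℤ, (ε = 0 ∨ ε = 1) ∧
        x = 4 * k + 2 * (((n + 1) / 2 : ℕ) : ℤ) - N.card - L.card - ε) ∧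
    x ∉ ({(n : ℤ) - N.card - L.card - 2, (n : ℤ) - N.card - L.card - 1,
          (n : ℤ) - N.card - L.card, (n : ℤ) - N.card - L.card + 1,
          (n : ℤ) - N.card - L.card + 2} : Set ℤ)}

-- parity helper
lemma neg_one_pow_congr' {x y : ℕ} (h : x % 2 = y % 2) : ((-1:ℂ))^x = (-1)^y := by
  rw [neg_one_pow_eq_pow_mod_two, h, ← neg_one_pow_eq_pow_mod_two]

lemma choose_two_parity (x : ℕ) : Nat.choose x 2 % 2 = (x / 2) % 2 := by
  match x with
  | 0 => rfl
  | (s+1) =>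
    have h2 : 2 * Nat.choose (s+1) 2 = (s+1) * s := by
      rw [Nat.choose_two_right]
      simp only [Nat.add_sub_cancel]
      rw [Nat.mul_div_cancel' ]
      rcases Nat.even_or_odd s with hs | hs
      · exact Dvd.dvd.mul_left hs.two_dvd _
      · exact Dvd.dvd.mul_right (Even.two_dvd (by simpa using hs.add_one)) _
    rcases Nat.even_or_odd s with ⟨t, rfl⟩ | ⟨t, rfl⟩
    · have hexp : (t + t + 1) * (t + t) = 4 * (t*t) + 2*t := by ring
      rw [hexp] at h2
      generalize t*t = A at h2
      omega
    · have hexp : (2*t + 1 + 1) * (2*t + 1) = 4 * (t*t) + 6*t + 2 := by ring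
      rw [hexp] at h2
      generalize t*t = A at h2
      omega

section invc
variable {n : ℕ}

lemma invCount_union_left {A B C : Finset (Fin n)} (h : Disjoint A B) :
    invCount (A ∪ B) C = invCount A C + invCount B C := by
  unfold invCount
  rw [Finset.union_product, Finset.filter_union, Finset.card_union_of_disjoint]
  exact Finset.disjoint_filter_filter (Finset.disjoint_product.mpr (Or.inl h))

lemma invCount_union_right {A B C : Finset (Fin n)} (h : Disjoint B C) :
    invCount A (B ∪ C) = invCount A B + invCount A C := by
  unfold invCount
  rw [Finset.product_union, Finset.filter_union, Finset.card_union_of_disjoint]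
  exact Finset.disjoint_filter_filter (Finset.disjoint_product.mpr (Or.inr h))

lemma invCount_singleton_left {i : Fin n} {B : Finset (Fin n)} :
    invCount {i} B = (B.filter (fun a => a < i)).card := by
  unfold invCount
  rw [Finset.singleton_product, Finset.filter_map, Finset.card_map]
  rfl

lemma invCount_singleton_right {i : Fin n} {A : Finset (Fin n)} :
    invCount A {i} = (A.filter (fun a => i < a)).card := by
  unfold invCount
  rw [Finset.product_singleton, Finset.filter_map, Finset.card_map]
  rfl

lemma invCount_empty_right {A : Finset (Fin n)} : invCount A ∅ = 0 := by
  unfold invCount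
  simp

lemma invCount_empty_left {A : Finset (Fin n)} : invCount ∅ A = 0 := by
  unfold invCount
  simp

lemma empty_symmDiff' (S : Finset (Fin n)) : (∅ : Finset (Fin n)) ∆ S = S := by
  ext a; simp [Finset.mem_symmDiff]

lemma symmDiff_self' (S : Finset (Fin n)) : S ∆ S = ∅ := by
  ext a; simp [Finset.mem_symmDiff]

lemma singleton_symmDiff {i : Fin n} {S : Finset (Fin n)} (hi : i ∈ S) :
    ({i} : Finset (Fin n)) ∆ S = S \ {i} := by
  ext a; simp [Finset.mem_symmDiff]; aesop

lemma sdiffSymmDiffSelf {i : Fin n} {S : Finset (Fin n)} (hi : i ∈ S) :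
    (S \ {i}) ∆ S = {i} := by
  ext a; simp [Finset.mem_symmDiff]; aesop

lemma symmDiff_singleton {i : Fin n} {S : Finset (Fin n)} (hi : i ∈ S) :
    S ∆ ({i} : Finset (Fin n)) = S \ {i} := by
  rw [symmDiff_comm]; exact singleton_symmDiff hi

lemma compl_sdiff_singleton {i : Fin n} {S : Finset (Fin n)} :
    (S \ {i})ᶜ = Sᶜ ∪ {i} := by
  ext a; simp [Finset.mem_compl, Finset.mem_sdiff]; tauto

lemma low_sdiff_self {i : Fin n} {S : Finset (Fin n)} :
    ((S \ {i}).filter (fun a => a < i)).card = low i S := by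
  unfold low
  congr 1
  ext a
  simp only [Finset.mem_filter, Finset.mem_sdiff, Finset.mem_singleton]
  constructor
  · rintro ⟨⟨h1, _⟩, h2⟩; exact ⟨h1, h2⟩
  · rintro ⟨h1, h2⟩; exact ⟨⟨h1, fun he => absurd (he ▸ h2) (lt_irrefl i)⟩, h2⟩

lemma invCount_compl_self {S : Finset (Fin n)} {i : Fin n} (hi : i ∈ S) :
    invCount (Sᶜ) (S \ {i}) + invCount (Sᶜ) {i} = invCount Sᶜ S := by
  rw [← invCount_union_right (by simp), Finset.sdiff_union_of_subset (Finset.singleton_subset_iff.mpr hi)]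

lemma signExp_eval (S K : Finset (Fin n)) :
    signExp (∅ : Finset (Fin n)) Sᶜ K =
    ((K ∆ S)ᶜ).card * Sᶜ.card + Nat.choose ((K ∆ S)ᶜ).card 2
      + invCount ((K ∆ S)ᶜ) (K ∆ S) + n * (K ∆ S).card + invCount Sᶜ K := by
  unfold signExp
  simp [invCount_empty_left, invCount_empty_right]

lemma se_empty_eq (S : Finset (Fin n)) :
    signExp (∅ : Finset (Fin n)) Sᶜ ∅ =
      Sᶜ.card * Sᶜ.card + Nat.choose Sᶜ.card 2 + invCount Sᶜ S + n * S.card := by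
  rw [signExp_eval, empty_symmDiff', invCount_empty_right]
  omega

lemma se_S_eq (S : Finset (Fin n)) :
    signExp (∅ : Finset (Fin n)) Sᶜ S =
      n * Sᶜ.card + Nat.choose n 2 + invCount Sᶜ S := by
  rw [signExp_eval, symmDiff_self']
  simp [invCount_empty_right]

lemma se_singleton_eq {S : Finset (Fin n)} {i : Fin n} (hi : i ∈ S) :
    signExp (∅ : Finset (Fin n)) Sᶜ {i} =
      (Sᶜ.card + 1) * Sᶜ.card + Nat.choose (Sᶜ.card + 1) 2
        + (invCount Sᶜ S + low i S) + n * (S.card - 1) := by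
  rw [signExp_eval, singleton_symmDiff hi, compl_sdiff_singleton]
  have hdisj : Disjoint (Sᶜ) ({i} : Finset (Fin n)) := by
    simp [Finset.disjoint_singleton_right, hi]
  have hcard : (Sᶜ ∪ {i}).card = Sᶜ.card + 1 := by
    rw [Finset.card_union_of_disjoint hdisj, Finset.card_singleton]
  have hsplit : invCount (Sᶜ ∪ {i}) (S \ {i}) = invCount Sᶜ (S \ {i}) + low i S := by
    rw [invCount_union_left hdisj, invCount_singleton_left, low_sdiff_self]
  have hcomb := invCount_compl_self (S := S) hi
  have hcard2 : (S \ {i}).card = S.card - 1 := by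
    rw [Finset.card_sdiff_of_subset (by simpa using hi), Finset.card_singleton]
  rw [hcard, hsplit, hcard2]
  omega

lemma compl_singleton_decomp {S : Finset (Fin n)} {i : Fin n} (hi : i ∈ S) :
    ({i} : Finset (Fin n))ᶜ = Sᶜ ∪ (S \ {i}) := by
  ext a
  simp only [Finset.mem_compl, Finset.mem_singleton, Finset.mem_union, Finset.mem_sdiff]
  constructor
  · intro h
    by_cases ha : a ∈ S
    · exact Or.inr ⟨ha, h⟩
    · exact Or.inl ha
  · rintro (h | ⟨_, h⟩)
    · rintro rfl; exact h hi
    · exact h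

lemma high_sdiff_self {i : Fin n} {S : Finset (Fin n)} :
    ((S \ {i}).filter (fun a => i < a)).card = (S.filter (fun a => i < a)).card := by
  congr 1
  ext a
  simp only [Finset.mem_filter, Finset.mem_sdiff, Finset.mem_singleton]
  constructor
  · rintro ⟨⟨h1, _⟩, h2⟩; exact ⟨h1, h2⟩
  · rintro ⟨h1, h2⟩; exact ⟨⟨h1, fun he => absurd (he ▸ h2) (lt_irrefl i)⟩, h2⟩

lemma low_high_partition {i : Fin n} {S : Finset (Fin n)} (hi : i ∈ S) :
    low i S + (S.filter (fun a => i < a)).card + 1 = S.card := by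
  have h1 := Finset.card_filter_add_card_filter_not (s := S) (p := fun a => a < i)
  have h2 : S.filter (fun a => ¬ a < i) = insert i (S.filter (fun a => i < a)) := by
    ext a
    simp only [Finset.mem_filter, not_lt, Finset.mem_insert]
    constructor
    · rintro ⟨ha, hle⟩
      rcases lt_or_eq_of_le hle with h | h
      · exact Or.inr ⟨ha, h⟩
      · exact Or.inl h.symm
    · rintro (rfl | ⟨ha, hlt⟩)
      · exact ⟨hi, le_refl _⟩
      · exact ⟨ha, le_of_lt hlt⟩
  rw [h2, Finset.card_insert_of_notMem (by simp)] at h1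
  unfold low
  omega

lemma se_cosingleton_eq {S : Finset (Fin n)} {i : Fin n} (hi : i ∈ S) :
    signExp (∅ : Finset (Fin n)) Sᶜ (S \ {i}) =
      (n - 1) * Sᶜ.card + Nat.choose (n - 1) 2
        + (invCount Sᶜ S + (S.filter (fun a => i < a)).card) + n := by
  rw [signExp_eval, sdiffSymmDiffSelf hi]
  have hdisj : Disjoint (Sᶜ) (S \ {i}) :=
    Disjoint.mono_right Finset.sdiff_subset disjoint_compl_left
  have hcard : (({i} : Finset (Fin n))ᶜ).card = n - 1 := by
    rw [Finset.card_compl, Finset.card_singleton, Fintype.card_fin]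
  have hsplit : invCount (({i} : Finset (Fin n))ᶜ) {i}
      = invCount Sᶜ {i} + invCount (S \ {i}) {i} := by
    rw [compl_singleton_decomp hi, invCount_union_left hdisj]
  have h2 : invCount (S \ {i}) {i} = (S.filter (fun a => i < a)).card := by
    rw [invCount_singleton_right, high_sdiff_self]
  have hcomb := invCount_compl_self (S := S) hi
  rw [hcard, hsplit, h2, Finset.card_singleton]
  omega

lemma card_compl_eq {S : Finset (Fin n)} : Sᶜ.card = n - S.card := by
  rw [Finset.card_compl, Fintype.card_fin]

lemma card_le_n {S : Finset (Fin n)} : S.card ≤ n := by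
  simpa using Finset.card_le_univ S

lemma choose_two_pred {k : ℕ} (h : 1 ≤ k) :
    Nat.choose k 2 = Nat.choose (k-1) 2 + (k-1) := by
  obtain ⟨k', rfl⟩ : ∃ k', k = k' + 1 := ⟨k - 1, by omega⟩
  rw [Nat.choose_succ_succ, Nat.choose_one_right]
  simp [Nat.add_comm]

lemma pred_mul_add {k x : ℕ} (h : 1 ≤ k) : k * x = (k-1) * x + x := by
  obtain ⟨k', rfl⟩ : ∃ k', k = k' + 1 := ⟨k - 1, by omega⟩
  simp [Nat.add_mul]

lemma sign_se_singleton {S : Finset (Fin n)} {i : Fin n} (hi : i ∈ S) :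
    ((-1:ℂ))^(signExp (∅ : Finset (Fin n)) Sᶜ {i})
      = (-1)^(signExp (∅ : Finset (Fin n)) Sᶜ ∅ + (n + low i S)) := by
  apply neg_one_pow_congr'
  rw [se_singleton_eq hi, se_empty_eq]
  obtain ⟨m', hm'⟩ : ∃ m', S.card = m' + 1 :=
    ⟨S.card - 1, by have := Finset.card_pos.mpr ⟨i, hi⟩; omega⟩
  rw [hm']
  simp only [Nat.add_sub_cancel]
  rw [Nat.choose_succ_succ, Nat.choose_one_right]
  have hcc : Sᶜ.card.choose (Nat.succ 1) = Sᶜ.card.choose 2 := rfl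
  rw [hcc]
  have h1 : (Sᶜ.card + 1) * Sᶜ.card = Sᶜ.card * Sᶜ.card + Sᶜ.card := by ring
  have h2 : n * (m' + 1) = n * m' + n := by ring
  rw [h1, h2]
  generalize Sᶜ.card * Sᶜ.card = A
  generalize n * m' = B
  omega

lemma sign_se_S (S : Finset (Fin n)) :
    ((-1:ℂ))^(signExp (∅ : Finset (Fin n)) Sᶜ S)
      = (-1)^(signExp (∅ : Finset (Fin n)) Sᶜ ∅
          + (S.card + Nat.choose n 2 + Nat.choose (n - S.card) 2)) := by
  apply neg_one_pow_congr'
  rw [se_S_eq, se_empty_eq]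
  have hn : n = Sᶜ.card + S.card := by
    have h1 := card_compl_eq (S := S)
    have h2 := card_le_n (S := S)
    omega
  have e0 : n - S.card = Sᶜ.card := by omega
  rw [e0]
  have e1 : n * Sᶜ.card = Sᶜ.card * Sᶜ.card + S.card * Sᶜ.card := by
    have h : (Sᶜ.card + S.card) * Sᶜ.card = Sᶜ.card * Sᶜ.card + S.card * Sᶜ.card := by ring
    rw [← h, ← hn]
  have e2 : n * S.card = S.card * Sᶜ.card + S.card * S.card := by
    have h : (Sᶜ.card + S.card) * S.card = S.card * Sᶜ.card + S.card * S.card := by ring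
    rw [← h, ← hn]
  rw [e1, e2]
  have e3 : 2 ∣ S.card * S.card + S.card := by
    have h := Nat.even_mul_succ_self S.card
    have : S.card * (S.card + 1) = S.card * S.card + S.card := by ring
    rw [this] at h
    exact h.two_dvd
  generalize Sᶜ.card * Sᶜ.card = A at *
  generalize S.card * Sᶜ.card = B at *
  generalize S.card * S.card = Cc at *
  omega

lemma sign_se_cosingleton {S : Finset (Fin n)} {i : Fin n} (hi : i ∈ S) :
    ((-1:ℂ))^(signExp (∅ : Finset (Fin n)) Sᶜ (S \ {i}))
      = (-1)^(signExp (∅ : Finset (Fin n)) Sᶜ S + (n + low i S)) := by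
  apply neg_one_pow_congr'
  rw [se_cosingleton_eq hi, se_S_eq]
  obtain ⟨n', hn'⟩ : ∃ n', n = n' + 1 := ⟨n - 1, by have := i.pos; omega⟩
  have hn : n = Sᶜ.card + S.card := by
    have h1 := card_compl_eq (S := S)
    have h2 := card_le_n (S := S)
    omega
  have hpart := low_high_partition hi
  have hpos : 1 ≤ n := by have := i.pos; omega
  rw [choose_two_pred hpos, pred_mul_add (x := Sᶜ.card) hpos]
  generalize (n-1) * Sᶜ.card = A
  generalize Nat.choose (n-1) 2 = B
  omega

lemma prod_sign_inter {K : Finset (Fin n)} (M : Finset (Fin n)) :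
    (∏ i ∈ M, (if i ∈ K then (-1:ℂ) else 1)) = (-1:ℂ)^((M ∩ K).card) := by
  rw [Finset.prod_ite, Finset.prod_const, Finset.prod_const_one, mul_one,
    Finset.filter_mem_eq_inter]

lemma sumA {S K : Finset (Fin n)} (hK : K ⊆ S) :
    ∑ M ∈ S.powerset, ((-1:ℂ))^((M ∩ K).card)
      = if K = ∅ then (2:ℂ)^S.card else 0 := by
  have h := Finset.prod_add (fun i => if i ∈ K then (-1:ℂ) else 1) (fun _ => (1:ℂ)) S
  have h2 : ∑ M ∈ S.powerset, ((-1:ℂ))^((M ∩ K).card)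
      = ∏ i ∈ S, ((if i ∈ K then (-1:ℂ) else 1) + 1) := by
    rw [h]
    apply Finset.sum_congr rfl
    intro M _
    rw [Finset.prod_const_one, mul_one, prod_sign_inter]
  rw [h2]
  by_cases hK0 : K = ∅
  · subst hK0
    rw [if_pos rfl]
    have : ∀ i ∈ S, ((if i ∈ (∅ : Finset (Fin n)) then (-1:ℂ) else 1) + 1) = 2 := by
      intro i _; simp; norm_num
    rw [Finset.prod_congr rfl this, Finset.prod_const]
  · rw [if_neg hK0]
    obtain ⟨a, ha⟩ := Finset.nonempty_iff_ne_empty.mpr hK0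
    exact Finset.prod_eq_zero (hK ha) (by simp [ha])

lemma sign_inter_symmDiff {M K : Finset (Fin n)} (i : Fin n) :
    ((-1:ℂ))^((M ∩ (K ∆ {i})).card) = (-1:ℂ)^((M ∩ K).card) * (-1)^((M ∩ {i}).card) := by
  rw [← pow_add]
  by_cases hi : i ∈ K
  · rw [symmDiff_singleton hi]
    have hsplit : M ∩ K = (M ∩ (K \ {i})) ∪ (M ∩ {i} ∩ K) := by
      ext a
      simp only [Finset.mem_inter, Finset.mem_union, Finset.mem_sdiff, Finset.mem_singleton]
      constructor
      · rintro ⟨h1, h2⟩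
        by_cases he : a = i
        · exact Or.inr ⟨⟨h1, he⟩, h2⟩
        · exact Or.inl ⟨h1, h2, he⟩
      · rintro (⟨h1, h2, _⟩ | ⟨⟨h1, _⟩, h2⟩) <;> exact ⟨h1, h2⟩
    have hdisj : Disjoint (M ∩ (K \ {i})) (M ∩ {i} ∩ K) := by
      apply Finset.disjoint_left.mpr
      intro a haa hab
      simp only [Finset.mem_inter, Finset.mem_sdiff, Finset.mem_singleton] at haa hab
      exact haa.2.2 hab.1.2
    have hic : M ∩ {i} ∩ K = M ∩ {i} := by
      ext a
      simp only [Finset.mem_inter, Finset.mem_singleton]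
      constructor
      · rintro ⟨h1, _⟩; exact h1
      · rintro ⟨h1, h2⟩; exact ⟨⟨h1, h2⟩, h2 ▸ hi⟩
    rw [hsplit, Finset.card_union_of_disjoint hdisj, hic]
    have hh : (M ∩ (K \ {i})).card + (M ∩ {i}).card + (M ∩ {i}).card
        = (M ∩ (K \ {i})).card + 2 * (M ∩ {i}).card := by ring
    rw [hh, pow_add, pow_mul]
    norm_num
  · have hsd : K ∆ {i} = K ∪ {i} := by
      ext a
      simp only [Finset.mem_symmDiff, Finset.mem_union, Finset.mem_singleton]
      constructor
      · rintro (⟨h, _⟩ | ⟨h, _⟩)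
        · exact Or.inl h
        · exact Or.inr h
      · rintro (h | h)
        · exact Or.inl ⟨h, fun he => hi (he ▸ h)⟩
        · exact Or.inr ⟨h, fun hk => hi (h ▸ hk)⟩
    rw [hsd, Finset.inter_union_distrib_left, Finset.card_union_of_disjoint]
    apply Finset.disjoint_left.mpr
    intro a haa hab
    simp only [Finset.mem_inter, Finset.mem_singleton] at haa hab
    exact hi (hab.2 ▸ haa.2)

lemma card_scalar {S M : Finset (Fin n)} (hM : M ⊆ S) :
    ((S.card : ℂ) - 2 * M.card) = ∑ i ∈ S, (if i ∈ M then (-1:ℂ) else 1) := by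
  rw [Finset.sum_ite, Finset.sum_const, Finset.sum_const, Finset.filter_mem_eq_inter,
    Finset.inter_eq_right.mpr hM]
  have h1 := Finset.card_filter_add_card_filter_not (s := S) (p := fun i => i ∈ M)
  rw [Finset.filter_mem_eq_inter, Finset.inter_eq_right.mpr hM] at h1
  have h2 : (Finset.filter (fun i => ¬ i ∈ M) S).card = S.card - M.card := by omega
  rw [h2]
  have h3 : M.card ≤ S.card := Finset.card_le_card hM
  rw [nsmul_eq_mul, nsmul_eq_mul, mul_one, Nat.cast_sub h3]
  push_cast
  ring

lemma sumB {S K : Finset (Fin n)} (hK : K ⊆ S) :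
    ∑ M ∈ S.powerset, (-1:ℂ)^((M ∩ K).card) * ((S.card:ℂ) - 2 * M.card)
      = if K.card = 1 then (2:ℂ)^S.card else 0 := by
  have step1 : ∑ M ∈ S.powerset, (-1:ℂ)^((M ∩ K).card) * ((S.card:ℂ) - 2 * M.card)
      = ∑ i ∈ S, ∑ M ∈ S.powerset, (-1:ℂ)^((M ∩ (K ∆ {i})).card) := by
    rw [Finset.sum_comm]
    apply Finset.sum_congr rfl
    intro M hM
    rw [card_scalar (Finset.mem_powerset.mp hM), Finset.mul_sum]
    apply Finset.sum_congr rfl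
    intro i _
    rw [sign_inter_symmDiff]
    congr 1
    by_cases hiM : i ∈ M
    · have : M ∩ {i} = {i} := by
        ext a; simp only [Finset.mem_inter, Finset.mem_singleton]
        exact ⟨fun h => h.2, fun h => ⟨h ▸ hiM, h⟩⟩
      rw [if_pos hiM, this, Finset.card_singleton, pow_one]
    · have : M ∩ {i} = ∅ := by
        ext a; simp only [Finset.mem_inter, Finset.mem_singleton, Finset.notMem_empty, iff_false,
          not_and]
        rintro h rfl; exact hiM h
      rw [if_neg hiM, this, Finset.card_empty, pow_zero]
  rw [step1]
  have step2 : ∀ i ∈ S, ∑ M ∈ S.powerset, (-1:ℂ)^((M ∩ (K ∆ {i})).card)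
      = if K = {i} then (2:ℂ)^S.card else 0 := by
    intro i hi
    have hsub : K ∆ {i} ⊆ S := by
      intro a ha
      rw [Finset.mem_symmDiff] at ha
      rcases ha with ⟨h, _⟩ | ⟨h, _⟩
      · exact hK h
      · rwa [Finset.mem_singleton.mp h]
    rw [sumA hsub]
    apply if_congr _ rfl rfl
    rw [← Finset.bot_eq_empty, symmDiff_eq_bot]
  rw [Finset.sum_congr rfl step2]
  by_cases hc : K.card = 1
  · obtain ⟨a, rfl⟩ := Finset.card_eq_one.mp hc
    rw [if_pos hc]
    rw [Finset.sum_eq_single_of_mem a (hK (Finset.mem_singleton_self a))]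
    · rw [if_pos rfl]
    · intro i _ hne
      rw [if_neg]
      intro h
      exact hne (Finset.singleton_injective h.symm)
  · rw [if_neg hc]
    apply Finset.sum_eq_zero
    intro i _
    rw [if_neg]
    intro h
    rw [h, Finset.card_singleton] at hc
    exact hc rfl

end invc

/-- the exponent controlling the parity class -/
def qq (n m : ℕ) : ℕ := m + Nat.choose n 2 + Nat.choose (n - m) 2

/-- the coefficients of the linear combination -/
noncomputable def dcoef (n : ℕ) (S M : Finset (Fin n)) : ℂ :=
  (-1:ℂ)^(M.card) * (-1)^(signExp (∅ : Finset (Fin n)) Sᶜ ∅) * (2:ℂ)⁻¹^(S.card+1) *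
    (1 + (-1)^(M.card + qq n S.card)) *
    ((-1)^n * ((S.card:ℂ) - 2*M.card) - (if Odd S.card then 1 else 0))

lemma qq_parity (n m : ℕ) : qq n m % 2 = (m + n/2 + (n-m)/2) % 2 := by
  have c1 := choose_two_parity n
  have c2 := choose_two_parity (n-m)
  unfold qq
  omega

lemma dcoef_adm {n : ℕ} {S M : Finset (Fin n)} (hM : M ⊆ S) (h : dcoef n S M ≠ 0) :
    (2 * M.card : ℤ) ∈ admissible n (∅ : Finset (Fin n)) Sᶜ := by
  have hj : M.card ≤ S.card := Finset.card_le_card hM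
  have hmn : S.card ≤ n := card_le_n
  have hcompl : Sᶜ.card = n - S.card := card_compl_eq
  have hq := qq_parity n S.card
  have hpar : (M.card + qq n S.card) % 2 = 0 := by
    by_contra hodd
    apply h
    unfold dcoef
    have hoddd : Odd (M.card + qq n S.card) := Nat.odd_iff.mpr (by omega)
    rw [hoddd.neg_one_pow]
    ring
  have hfac : (-1:ℂ)^n * ((S.card:ℂ) - 2*M.card) - (if Odd S.card then 1 else 0) ≠ 0 := by
    intro hf
    apply h
    unfold dcoef
    rw [hf, mul_zero]
  simp only [admissible, Set.mem_setOf_eq, Set.mem_insert_iff, Set.mem_singleton_iff,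
    Finset.card_empty, Nat.cast_zero]
  rcases Nat.even_or_odd n with hn | hn <;> rcases Nat.even_or_odd S.card with hm | hm
  · -- n even, m even
    rw [hn.neg_one_pow, if_neg (by simpa using hm), one_mul, sub_zero] at hfac
    have hL : (S.card:ℤ) ≠ 2 * M.card := by
      intro he; apply hfac; rw [sub_eq_zero]; exact_mod_cast he
    obtain ⟨a, ha⟩ := hn; obtain ⟨b, hb⟩ := hm
    refine ⟨⟨(2*(M.card:ℤ) - 2*(((n+1)/2 : ℕ):ℤ) + (Sᶜ.card:ℤ) + 0)/4, 0, Or.inl rfl, by omega⟩, by omega⟩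
  · -- n even, m odd
    rw [hn.neg_one_pow, if_pos hm, one_mul] at hfac
    have hL : (S.card:ℤ) - 2 * M.card ≠ 1 := by
      intro he; apply hfac; rw [sub_eq_zero]; exact_mod_cast he
    obtain ⟨a, ha⟩ := hn; obtain ⟨b, hb⟩ := hm
    refine ⟨⟨(2*(M.card:ℤ) - 2*(((n+1)/2 : ℕ):ℤ) + (Sᶜ.card:ℤ) + 1)/4, 1, Or.inr rfl, by omega⟩, by omega⟩
  · -- n odd, m even
    rw [hn.neg_one_pow, if_neg (by simpa using hm), sub_zero, neg_one_mul, neg_ne_zero] at hfac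
    have hL : (S.card:ℤ) ≠ 2 * M.card := by
      intro he; apply hfac; rw [sub_eq_zero]; exact_mod_cast he
    obtain ⟨a, ha⟩ := hn; obtain ⟨b, hb⟩ := hm
    refine ⟨⟨(2*(M.card:ℤ) - 2*(((n+1)/2 : ℕ):ℤ) + (Sᶜ.card:ℤ) + 1)/4, 1, Or.inr rfl, by omega⟩, by omega⟩
  · -- n odd, m odd
    rw [hn.neg_one_pow, if_pos hm, neg_one_mul] at hfac
    have hL : (S.card:ℤ) - 2 * M.card ≠ -1 := by
      intro he
      apply hfac
      have : ((S.card:ℂ) - 2*M.card) = -1 := by exact_mod_cast he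
      rw [this]; ring
    obtain ⟨a, ha⟩ := hn; obtain ⟨b, hb⟩ := hm
    refine ⟨⟨(2*(M.card:ℤ) - 2*(((n+1)/2 : ℕ):ℤ) + (Sᶜ.card:ℤ) + 0)/4, 0, Or.inl rfl, by omega⟩, by omega⟩

section inner
variable {n : ℕ}

lemma neg_one_pow_double (b : ℕ) : ((-1:ℂ))^(b + b) = 1 := by
  rw [← two_mul, pow_mul]
  norm_num

lemma pow_neg_one_cancel {a b c : ℕ} (h : a = b + c) :
    ((-1:ℂ))^a * (-1)^c = (-1)^b := by
  subst h
  rw [pow_add, mul_assoc, ← pow_add, neg_one_pow_double, mul_one]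

lemma sign_card_sdiff (M K : Finset (Fin n)) :
    (-1:ℂ)^(M.card) * (-1)^((M \ K).card) = (-1)^((M ∩ K).card) :=
  pow_neg_one_cancel (by rw [← Finset.card_inter_add_card_sdiff M K])

lemma inter_sdiff_eq {S M K : Finset (Fin n)} (hM : M ⊆ S) :
    M ∩ (S \ K) = M \ K := by
  ext a
  simp only [Finset.mem_inter, Finset.mem_sdiff]
  exact ⟨fun ⟨h1, _, h3⟩ => ⟨h1, h3⟩, fun ⟨h1, h2⟩ => ⟨h1, hM h1, h2⟩⟩

lemma sign_card_inter_sdiff {S M K : Finset (Fin n)} (hM : M ⊆ S) :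
    (-1:ℂ)^(M.card) * (-1)^((M ∩ K).card) = (-1)^((M ∩ (S \ K)).card) := by
  rw [inter_sdiff_eq hM]
  exact pow_neg_one_cancel (by rw [← Finset.card_inter_add_card_sdiff M K]; omega)

lemma compl_inter_eq (K M : Finset (Fin n)) : Kᶜ ∩ M = M \ K := by
  ext a
  simp only [Finset.mem_inter, Finset.mem_compl, Finset.mem_sdiff]
  tauto
end inner

lemma inner_coeff {n : ℕ} {S K : Finset (Fin n)} (hK : K ⊆ S) :
    ∑ M ∈ S.powerset, dcoef n S M * (-1:ℂ)^((Kᶜ ∩ M).card + signExp (∅:Finset (Fin n)) Sᶜ K)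
      = (-1:ℂ)^(signExp (∅:Finset (Fin n)) Sᶜ K) *
          ((-1)^(signExp (∅:Finset (Fin n)) Sᶜ ∅) * (2:ℂ)⁻¹^(S.card+1)) *
        ( (-1)^n * (if K.card = 1 then (2:ℂ)^S.card else 0)
          - (if Odd S.card then (1:ℂ) else 0) * (if K = ∅ then (2:ℂ)^S.card else 0)
          + (-1)^(qq n S.card) * ((-1)^n * (if (S\K).card = 1 then (2:ℂ)^S.card else 0))
          - (if Odd S.card then (1:ℂ) else 0) *
              ((-1)^(qq n S.card) * (if K = S then (2:ℂ)^S.card else 0)) ) := by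
  have hstep : ∀ M ∈ S.powerset,
      dcoef n S M * (-1:ℂ)^((Kᶜ ∩ M).card + signExp (∅:Finset (Fin n)) Sᶜ K)
      = (-1:ℂ)^(signExp (∅:Finset (Fin n)) Sᶜ K) *
          ((-1)^(signExp (∅:Finset (Fin n)) Sᶜ ∅) * (2:ℂ)⁻¹^(S.card+1)) *
        ( (-1)^n * ((-1:ℂ)^((M ∩ K).card) * ((S.card:ℂ) - 2*M.card))
          - (if Odd S.card then (1:ℂ) else 0) * (-1:ℂ)^((M ∩ K).card)
          + (-1)^(qq n S.card) *
              ((-1)^n * ((-1:ℂ)^((M ∩ (S \ K)).card) * ((S.card:ℂ) - 2*M.card)))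
          - (if Odd S.card then (1:ℂ) else 0) *
              ((-1)^(qq n S.card) * (-1:ℂ)^((M ∩ (S \ K)).card)) ) := by
    intro M hM
    have hMS : M ⊆ S := Finset.mem_powerset.mp hM
    rw [compl_inter_eq, pow_add]
    have hxw := sign_card_sdiff M K
    have hy := sign_card_inter_sdiff (K := K) hMS
    unfold dcoef
    rw [pow_add ((-1:ℂ)) M.card (qq n S.card)]
    linear_combination
      (((-1:ℂ)^(signExp (∅:Finset (Fin n)) Sᶜ ∅) * (2:ℂ)⁻¹^(S.card+1) *
        (-1:ℂ)^(signExp (∅:Finset (Fin n)) Sᶜ K) *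
        ((-1:ℂ)^n * ((S.card:ℂ) - 2*M.card) - (if Odd S.card then (1:ℂ) else 0)) *
        (1 + (-1:ℂ)^(qq n S.card) * (-1:ℂ)^(M.card))) * hxw)
      + (((-1:ℂ)^(signExp (∅:Finset (Fin n)) Sᶜ ∅) * (2:ℂ)⁻¹^(S.card+1) *
        (-1:ℂ)^(signExp (∅:Finset (Fin n)) Sᶜ K) *
        ((-1:ℂ)^n * ((S.card:ℂ) - 2*M.card) - (if Odd S.card then (1:ℂ) else 0)) *
        (-1:ℂ)^(qq n S.card)) * hy)
  rw [Finset.sum_congr rfl hstep]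
  rw [← Finset.mul_sum]
  congr 1
  have hK' : S \ K ⊆ S := Finset.sdiff_subset
  have hones : (S \ K = ∅) = (K = S) := by
    apply propext
    rw [Finset.sdiff_eq_empty_iff_subset]
    exact ⟨fun h => Finset.Subset.antisymm hK h, fun h => h ▸ Finset.Subset.refl S⟩
  rw [Finset.sum_sub_distrib, Finset.sum_add_distrib, Finset.sum_sub_distrib,
    ← Finset.mul_sum, ← Finset.mul_sum, ← Finset.mul_sum, ← Finset.mul_sum,
    sumB hK, sumA hK]
  rw [← Finset.mul_sum, ← Finset.mul_sum, sumB hK', sumA hK']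
  simp only [hones]

lemma low_empty {n : ℕ} (i : Fin n) : low i (∅ : Finset (Fin n)) = 0 := by
  unfold low; simp

lemma two_inv_pow {m : ℕ} : ((2:ℂ)⁻¹)^(m+1) * (2:ℂ)^m = 2⁻¹ := by
  rw [pow_succ, mul_comm (((2:ℂ)⁻¹)^m) 2⁻¹, mul_assoc, ← mul_pow]
  norm_num

lemma gamma_sq {a : ℕ} : ((-1:ℂ))^a * (-1)^a = 1 := by
  rw [← pow_add]; exact neg_one_pow_double a

lemma ite_smul_zero {M : Type*} [AddCommMonoid M] [Module ℂ M]
    {c : Prop} [Decidable c] (a : ℂ) (p : M) :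
    (if c then a • p else 0) = (if c then a else 0) • p := by
  split_ifs
  · rfl
  · exact (zero_smul _ _).symm


lemma key_identity (n : ℕ) (S : Finset (Fin n)) :
    exEq n ∅ Sᶜ ∅ = ∑ M ∈ S.powerset, dcoef n S M • pEq n ∅ Sᶜ M := by
  classical
  have hsets : ((∅ ∪ Sᶜ : Finset (Fin n)))ᶜ = S := by
    rw [Finset.empty_union, compl_compl]
  have hidx : (Finset.univ : Finset (Finset (Fin n))).filter
      (fun K => ∅ ⊆ K ∧ Disjoint K Sᶜ) = S.powerset := by
    ext K
    simp [Finset.mem_powerset, disjoint_compl_right_iff, Finset.empty_subset]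
  -- abbreviations
  set γ : ℂ := (-1:ℂ)^(signExp (∅:Finset (Fin n)) Sᶜ ∅) with hγ
  set o : ℂ := (if Odd S.card then (1:ℂ) else 0) with ho
  set E : ℂ := (-1:ℂ)^n with hE
  set P : ℂ := (-1:ℂ)^(qq n S.card) with hP
  set c : ℂ := ((2:ℂ)⁻¹)^(S.card+1) with hc
  have step1 : ∑ M ∈ S.powerset, dcoef n S M • pEq n ∅ Sᶜ M
      = ∑ K ∈ S.powerset,
          (∑ M ∈ S.powerset, dcoef n S M *
            ((-1:ℂ)^((Kᶜ ∩ M).card + signExp (∅:Finset (Fin n)) Sᶜ K))) •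
          ((X K : MvPolynomial (Finset (Fin n)) ℂ) * X (K ∆ S)) := by
    simp only [pEq, hidx, hsets, Finset.smul_sum, smul_smul]
    rw [Finset.sum_comm]
    simp only [Finset.sum_smul]
  rw [step1]
  have step2 : ∀ K ∈ S.powerset,
      (∑ M ∈ S.powerset, dcoef n S M *
        ((-1:ℂ)^((Kᶜ ∩ M).card + signExp (∅:Finset (Fin n)) Sᶜ K))) •
        ((X K : MvPolynomial (Finset (Fin n)) ℂ) * X (K ∆ S))
      = (if K.card = 1 then
            ((-1:ℂ)^(signExp (∅:Finset (Fin n)) Sᶜ K) * (γ * c) * E * 2^S.card) •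
              ((X K : MvPolynomial (Finset (Fin n)) ℂ) * X (K ∆ S)) else 0)
        - (if K = ∅ then
            ((-1:ℂ)^(signExp (∅:Finset (Fin n)) Sᶜ K) * (γ * c) * o * 2^S.card) •
              ((X K : MvPolynomial (Finset (Fin n)) ℂ) * X (K ∆ S)) else 0)
        + (if (S \ K).card = 1 then
            ((-1:ℂ)^(signExp (∅:Finset (Fin n)) Sᶜ K) * (γ * c) * (P * E) * 2^S.card) •
              ((X K : MvPolynomial (Finset (Fin n)) ℂ) * X (K ∆ S)) else 0)
        - (if K = S then
            ((-1:ℂ)^(signExp (∅:Finset (Fin n)) Sᶜ K) * (γ * c) * (o * P) * 2^S.card) •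
              ((X K : MvPolynomial (Finset (Fin n)) ℂ) * X (K ∆ S)) else 0) := by
    intro K hK
    rw [inner_coeff (Finset.mem_powerset.mp hK)]
    rw [← hγ, ← ho, ← hE, ← hP, ← hc]
    simp only [ite_smul_zero]
    rw [← sub_smul, ← add_smul, ← sub_smul]
    congr 1
    split_ifs <;> ring
  rw [Finset.sum_congr rfl step2]
  rw [Finset.sum_sub_distrib, Finset.sum_add_distrib, Finset.sum_sub_distrib]
  have hqq_eq : qq n S.card = S.card + Nat.choose n 2 + Nat.choose (n - S.card) 2 := rfl
  have hγγ : γ * γ = 1 := by rw [hγ]; exact gamma_sq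
  have hPP : P * P = 1 := by rw [hP]; exact gamma_sq
  have hEE : E * E = 1 := by rw [hE]; exact gamma_sq
  have hc2 : c * 2^S.card = 2⁻¹ := by rw [hc]; exact two_inv_pow
  have hseS : (-1:ℂ)^(signExp (∅:Finset (Fin n)) Sᶜ S) = γ * P := by
    rw [sign_se_S, ← hqq_eq, pow_add, ← hγ, ← hP]
  -- the four sums
  have hsum2 : ∑ K ∈ S.powerset, (if K = ∅ then
        ((-1:ℂ)^(signExp (∅:Finset (Fin n)) Sᶜ K) * (γ * c) * o * 2^S.card) •
          ((X K : MvPolynomial (Finset (Fin n)) ℂ) * X (K ∆ S)) else 0)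
      = ((2:ℂ)⁻¹ * o) • ((X ∅ : MvPolynomial (Finset (Fin n)) ℂ) * X S) := by
    rw [Finset.sum_ite_eq' S.powerset ∅
      (fun K => ((-1:ℂ)^(signExp (∅:Finset (Fin n)) Sᶜ K) * (γ * c) * o * 2^S.card) •
          ((X K : MvPolynomial (Finset (Fin n)) ℂ) * X (K ∆ S))),
      if_pos (Finset.empty_mem_powerset S), empty_symmDiff']
    congr 1
    rw [← hγ]
    calc γ * (γ * c) * o * 2^S.card = (γ * γ) * (c * 2^S.card) * o := by ring
      _ = (2:ℂ)⁻¹ * o := by rw [hγγ, hc2, one_mul]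
  have hsum4 : ∑ K ∈ S.powerset, (if K = S then
        ((-1:ℂ)^(signExp (∅:Finset (Fin n)) Sᶜ K) * (γ * c) * (o * P) * 2^S.card) •
          ((X K : MvPolynomial (Finset (Fin n)) ℂ) * X (K ∆ S)) else 0)
      = ((2:ℂ)⁻¹ * o) • ((X ∅ : MvPolynomial (Finset (Fin n)) ℂ) * X S) := by
    rw [Finset.sum_ite_eq' S.powerset S
      (fun K => ((-1:ℂ)^(signExp (∅:Finset (Fin n)) Sᶜ K) * (γ * c) * (o * P) * 2^S.card) •
          ((X K : MvPolynomial (Finset (Fin n)) ℂ) * X (K ∆ S))),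
      if_pos (Finset.mem_powerset_self S), symmDiff_self', mul_comm (X S) _]
    congr 1
    rw [hseS]
    calc γ * P * (γ * c) * (o * P) * 2^S.card
        = (γ * γ) * (P * P) * (c * 2^S.card) * o := by ring
      _ = (2:ℂ)⁻¹ * o := by rw [hγγ, hPP, hc2]; ring
  have hsum1 : ∑ K ∈ S.powerset, (if K.card = 1 then
        ((-1:ℂ)^(signExp (∅:Finset (Fin n)) Sᶜ K) * (γ * c) * E * 2^S.card) •
          ((X K : MvPolynomial (Finset (Fin n)) ℂ) * X (K ∆ S)) else 0)
      = ∑ i ∈ S, ((2:ℂ)⁻¹ * (-1)^(low i S)) •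
          ((X {i} : MvPolynomial (Finset (Fin n)) ℂ) * X (S ∆ {i})) := by
    rw [← Finset.sum_filter, ← Finset.powersetCard_eq_filter, Finset.powersetCard_one,
      Finset.sum_map]
    apply Finset.sum_congr rfl
    intro i hi
    simp only [Function.Embedding.coeFn_mk]
    rw [sign_se_singleton hi, symmDiff_comm ({i} : Finset (Fin n)) S]
    congr 1
    rw [pow_add, ← hγ, pow_add, ← hE]
    calc γ * (E * (-1:ℂ)^(low i S)) * (γ * c) * E * 2^S.card
        = (γ * γ) * (E * E) * (c * 2^S.card) * (-1:ℂ)^(low i S) := by ring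
      _ = (2:ℂ)⁻¹ * (-1:ℂ)^(low i S) := by rw [hγγ, hEE, hc2]; ring
  have hsum3 : ∑ K ∈ S.powerset, (if (S \ K).card = 1 then
        ((-1:ℂ)^(signExp (∅:Finset (Fin n)) Sᶜ K) * (γ * c) * (P * E) * 2^S.card) •
          ((X K : MvPolynomial (Finset (Fin n)) ℂ) * X (K ∆ S)) else 0)
      = ∑ i ∈ S, ((2:ℂ)⁻¹ * (-1)^(low i S)) •
          ((X {i} : MvPolynomial (Finset (Fin n)) ℂ) * X (S ∆ {i})) := by
    rw [Finset.sum_nbij' (i := fun K => S \ K) (j := fun K => S \ K)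
      (t := S.powerset)
      (g := fun K => if K.card = 1 then
        ((-1:ℂ)^(signExp (∅:Finset (Fin n)) Sᶜ (S \ K)) * (γ * c) * (P * E) * 2^S.card) •
          ((X (S \ K) : MvPolynomial (Finset (Fin n)) ℂ) * X ((S \ K) ∆ S)) else 0)
      (fun K hK => Finset.mem_powerset.mpr Finset.sdiff_subset)
      (fun K hK => Finset.mem_powerset.mpr Finset.sdiff_subset)
      (fun K hK => Finset.sdiff_sdiff_eq_self (Finset.mem_powerset.mp hK))
      (fun K hK => Finset.sdiff_sdiff_eq_self (Finset.mem_powerset.mp hK))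
      (fun K hK => by
        simp only [Finset.sdiff_sdiff_eq_self (Finset.mem_powerset.mp hK)])]
    rw [← Finset.sum_filter, ← Finset.powersetCard_eq_filter, Finset.powersetCard_one,
      Finset.sum_map]
    apply Finset.sum_congr rfl
    intro i hi
    simp only [Function.Embedding.coeFn_mk]
    rw [sign_se_cosingleton hi, sdiffSymmDiffSelf hi,
      mul_comm (X (S \ {i}) : MvPolynomial (Finset (Fin n)) ℂ) (X {i}),
      ← symmDiff_singleton hi]
    congr 1
    rw [pow_add, hseS, pow_add, ← hE]
    calc γ * P * (E * (-1:ℂ)^(low i S)) * (γ * c) * (P * E) * 2^S.card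
        = (γ * γ) * (P * P) * (E * E) * (c * 2^S.card) * (-1:ℂ)^(low i S) := by ring
      _ = (2:ℂ)⁻¹ * (-1:ℂ)^(low i S) := by rw [hγγ, hPP, hEE, hc2]; ring
  rw [hsum1, hsum2, hsum3, hsum4]
  -- left-hand side
  have hex : exEq n ∅ Sᶜ ∅
      = (∑ i ∈ S, ((-1:ℂ)^(low i S)) •
          ((X {i} : MvPolynomial (Finset (Fin n)) ℂ) * X (S ∆ {i})))
        - (if Odd S.card then (X ∅ : MvPolynomial (Finset (Fin n)) ℂ) * X S else 0) := by
    unfold exEq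
    rw [hsets]
    simp only [empty_symmDiff', low_empty, zero_add]
  rw [hex]
  have hA : ∑ i ∈ S, ((2:ℂ)⁻¹ * (-1)^(low i S)) •
        ((X {i} : MvPolynomial (Finset (Fin n)) ℂ) * X (S ∆ {i}))
      + ∑ i ∈ S, ((2:ℂ)⁻¹ * (-1)^(low i S)) •
        ((X {i} : MvPolynomial (Finset (Fin n)) ℂ) * X (S ∆ {i}))
      = ∑ i ∈ S, ((-1:ℂ)^(low i S)) •
        ((X {i} : MvPolynomial (Finset (Fin n)) ℂ) * X (S ∆ {i})) := by
    rw [← Finset.sum_add_distrib]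
    apply Finset.sum_congr rfl
    intro i _
    rw [← add_smul]
    congr 1
    ring
  have hB : (if Odd S.card then (X ∅ : MvPolynomial (Finset (Fin n)) ℂ) * X S else 0)
      = ((2:ℂ)⁻¹ * o) • ((X ∅ : MvPolynomial (Finset (Fin n)) ℂ) * X S)
        + ((2:ℂ)⁻¹ * o) • ((X ∅ : MvPolynomial (Finset (Fin n)) ℂ) * X S) := by
    rw [← add_smul]
    by_cases h : Odd S.card
    · rw [if_pos h, ho, if_pos h]
      norm_num
    · rw [if_neg h, ho, if_neg h]
      norm_num
  rw [← hA, hB]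
  abel

/-- Each basic quadratic embedding equation `ex_{(∅,S)}` lies in the
span of the Lichtenstein embedding equations `p^M_{∅, [n]∖S}` with `M ⊆ S` and
`2|M| ∈ 𝓜_{∅, [n]∖S}`. -/
theorem exEq_empty_mem_span_pEq (n : ℕ) (S : Finset (Fin n)) :
    exEq n ∅ Sᶜ ∅ ∈ Submodule.span ℂ
      {p : MvPolynomial (Finset (Fin n)) ℂ |
        ∃ M : Finset (Fin n), M ⊆ S ∧ ((2 * M.card : ℤ)) ∈ admissible n ∅ Sᶜ ∧
          p = pEq n ∅ Sᶜ M} := by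
  classical
  rw [key_identity n S]
  rw [← Finset.sum_filter_of_ne (s := S.powerset)
      (p := fun M => (2 * M.card : ℤ) ∈ admissible n (∅:Finset (Fin n)) Sᶜ)
      (f := fun M => dcoef n S M • pEq n ∅ Sᶜ M)
      (fun M hM hne => dcoef_adm (Finset.mem_powerset.mp hM)
        (fun h0 => hne (by show dcoef n S M • pEq n ∅ Sᶜ M = 0; rw [h0, zero_smul])))]
  apply Submodule.sum_mem
  intro M hM
  rw [Finset.mem_filter] at hM
  exact Submodule.smul_mem _ _ (Submodule.subset_span
    ⟨M, Finset.mem_powerset.mp hM.1, hM.2, rfl⟩)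
end

section
/- Fix n ∈ ℕ and work in the polynomial ring R over ℂ with one variable X_A for each subset A ⊆ [n]. For every pair of disjoint subsets N, L ⊆ [n] and every antipode (K, K̄) of Q_{N,L} (i.e. N ⊆ K ⊆ [n]∖L and K̄ = K Δ S with S = [n]∖(N∪L)), the quadratic embedding equation ex_{(K,K̄)} lies in the ℂ-linear span of the full family of Lichtenstein embedding equations { p^M_{N′,L′} : M, N′, L′ ⊆ [n] pairwise disjoint and 2|M| ∈ 𝓜_{N′,L′} }. -/
open scoped symmDiff
open MvPolynomial

namespace Aux15
open Finset

variable {n : ℕ}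

/-- number of elements of `A` greater than `i` -/
def high {n : ℕ} (i : Fin n) (A : Finset (Fin n)) : ℕ :=
  (A.filter (fun a => i < a)).card

lemma low_union {i : Fin n} {A B : Finset (Fin n)} (h : Disjoint A B) :
    low i (A ∪ B) = low i A + low i B := by
  unfold low
  rw [Finset.filter_union, Finset.card_union_of_disjoint
    (h.mono (Finset.filter_subset _ _) (Finset.filter_subset _ _))]

lemma low_univ (i : Fin n) : low i (Finset.univ) = i.val := by
  unfold low
  rw [Finset.filter_gt_eq_Iio, Fin.card_Iio]

lemma low_compl_add (i : Fin n) (A : Finset (Fin n)) :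
    low i Aᶜ + low i A = i.val := by
  have h : Disjoint Aᶜ A := by
    rw [Finset.disjoint_left]; intro a ha; simp only [Finset.mem_compl] at ha; exact ha
  have e : Aᶜ ∪ A = (Finset.univ : Finset (Fin n)) := by
    ext a; simp only [Finset.mem_union, Finset.mem_compl, Finset.mem_univ, iff_true]; tauto
  rw [← low_union h, e, low_univ]

lemma low_add_high {i : Fin n} {A : Finset (Fin n)} (h : i ∉ A) :
    low i A + high i A = A.card := by
  unfold low high
  have e : A.filter (fun a => ¬ a < i) = A.filter (fun a => i < a) := by
    apply Finset.filter_congr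
    intro a ha
    simp only [not_lt]
    constructor
    · intro h1
      rcases lt_or_eq_of_le h1 with h2 | h2
      · exact h2
      · exact absurd (h2 ▸ ha) h
    · exact le_of_lt
  rw [← e, Finset.card_filter_add_card_filter_not (s := A) (fun a => a < i)]

lemma low_insert_of_not_lt {i j : Fin n} {A : Finset (Fin n)} (h : ¬ j < i) :
    low i (insert j A) = low i A := by
  unfold low
  rw [Finset.filter_insert, if_neg h]

lemma low_erase_self {i : Fin n} {A : Finset (Fin n)} :
    low i (A.erase i) = low i A := by
  unfold low
  congr 1
  ext a
  simp only [Finset.mem_filter, Finset.mem_erase]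
  exact ⟨fun ⟨⟨_, h1⟩, h2⟩ => ⟨h1, h2⟩, fun ⟨h1, h2⟩ => ⟨⟨ne_of_lt h2, h1⟩, h2⟩⟩

lemma invCount_eq_sum (A B : Finset (Fin n)) :
    invCount A B = ∑ a ∈ A, low a B := by
  classical
  induction A using Finset.induction_on with
  | empty => simp [invCount]
  | insert _ _ hj ih =>
    rename_i j A'
    rw [Finset.sum_insert hj, ← ih]
    unfold invCount
    have hprod : (insert j A') ×ˢ B = ({j} ×ˢ B) ∪ A' ×ˢ B := by
      ext ⟨x, y⟩
      simp only [Finset.mem_product, Finset.mem_union, Finset.mem_insert, Finset.mem_singleton]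
      tauto
    rw [hprod, Finset.filter_union, Finset.card_union_of_disjoint, low]
    · congr 1
      apply Finset.card_nbij' (i := Prod.snd) (j := fun b => (j, b))
      · rintro ⟨x, y⟩ hx
        simp only [Finset.mem_coe, Finset.mem_filter, Finset.mem_product, Finset.mem_singleton] at hx ⊢
        exact ⟨hx.1.2, hx.1.1 ▸ hx.2⟩
      · intro b hb
        simp only [Finset.mem_coe, Finset.mem_filter, Finset.mem_product, Finset.mem_singleton] at hb ⊢
        tauto
      · rintro ⟨x, y⟩ hx
        simp only [Finset.mem_coe, Finset.mem_filter, Finset.mem_product, Finset.mem_singleton] at hx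
        simp [hx.1.1]
      · intro b hb; rfl
    · rw [Finset.disjoint_left]
      rintro ⟨x, y⟩ hx hy
      simp only [Finset.mem_filter, Finset.mem_product, Finset.mem_singleton] at hx hy
      exact hj (hx.1.1 ▸ hy.1.1)

lemma invCount_insert_left {i : Fin n} {A B : Finset (Fin n)} (h : i ∉ A) :
    invCount (insert i A) B = low i B + invCount A B := by
  rw [invCount_eq_sum, invCount_eq_sum, Finset.sum_insert h]

lemma invCount_insert_right {i : Fin n} (A : Finset (Fin n)) {B : Finset (Fin n)} (h : i ∉ B) :
    invCount A (insert i B) = invCount A B + high i A := by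
  rw [invCount_eq_sum, invCount_eq_sum]
  unfold high
  rw [Finset.card_filter, ← Finset.sum_add_distrib]
  refine Finset.sum_congr rfl fun a _ => ?_
  unfold low
  rw [Finset.filter_insert]
  by_cases hia : i < a
  · rw [if_pos hia, Finset.card_insert_of_notMem (fun hc => h (Finset.filter_subset _ _ hc)),
      if_pos hia]
  · rw [if_neg hia, if_neg hia, add_zero]

lemma sum_low_self (A : Finset (Fin n)) :
    ∑ i ∈ A, low i A = A.card.choose 2 := by
  induction A using Finset.induction_on_max with
  | empty => simp
  | insert a s hmax ih =>
    have has : a ∉ s := fun h => lt_irrefl a (hmax a h)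
    rw [Finset.sum_insert has]
    have h1 : low a (insert a s) = s.card := by
      unfold low
      rw [Finset.filter_insert, if_neg (lt_irrefl a), Finset.filter_true_of_mem hmax]
    have h2 : ∀ i ∈ s, low i (insert a s) = low i s := fun i hi =>
      low_insert_of_not_lt (fun h => lt_asymm h (hmax i hi))
    rw [h1, Finset.sum_congr rfl h2, ih, Finset.card_insert_of_notMem has]
    rw [Nat.choose_succ_succ s.card 1, Nat.choose_one_right, add_comm]

end Aux15
namespace Aux15
open Finset

variable {n : ℕ}

lemma neg_one_pow_eq {a b : ℕ} (h : (a : ZMod 2) = (b : ZMod 2)) :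
    ((-1 : ℂ)) ^ a = (-1 : ℂ) ^ b := by
  have h2 : a % 2 = b % 2 := (ZMod.natCast_eq_natCast_iff a b 2).1 h
  rcases Nat.even_or_odd a with ha | ha
  · have hb : Even b := by rw [Nat.even_iff] at *; omega
    rw [ha.neg_one_pow, hb.neg_one_pow]
  · have hb : Odd b := by rw [Nat.odd_iff] at *; omega
    rw [ha.neg_one_pow, hb.neg_one_pow]

lemma zmod_two_add_self (a : ZMod 2) : a + a = 0 := by
  fin_cases a <;> decide

lemma card_symmDiff_zmod (A B : Finset (Fin n)) :
    (((A ∆ B).card : ZMod 2)) = A.card + B.card := by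
  have hd : A ∆ B = (A \ B) ∪ (B \ A) := by
    rw [symmDiff_def]; rfl
  have hdisj : Disjoint (A \ B) (B \ A) := disjoint_sdiff_sdiff
  have h1 : (A \ B).card + (A ∩ B).card = A.card := Finset.card_sdiff_add_card_inter A B
  have h2 : (B \ A).card + (B ∩ A).card = B.card := Finset.card_sdiff_add_card_inter B A
  have hBA : (B ∩ A) = (A ∩ B) := Finset.inter_comm B A
  rw [hd, Finset.card_union_of_disjoint hdisj]
  have : ((A \ B).card : ZMod 2) + (B \ A).card + ((A ∩ B).card + (A ∩ B).card)
      = (A.card : ZMod 2) + B.card := by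
    rw [← Nat.cast_add, ← Nat.cast_add]
    push_cast
    rw [← h1, ← h2, hBA]
    push_cast
    ring
  rw [zmod_two_add_self] at this
  push_cast at this ⊢
  rw [← this]; ring

lemma card_inter_symmDiff_zmod (M A B : Finset (Fin n)) :
    (((M ∩ (A ∆ B)).card : ZMod 2)) = (M ∩ A).card + (M ∩ B).card := by
  have h : M ∩ (A ∆ B) = (M ∩ A) ∆ (M ∩ B) := inf_symmDiff_distrib_left M A B
  rw [h, card_symmDiff_zmod]

lemma low_symmDiff_zmod (i : Fin n) (A B : Finset (Fin n)) :
    ((low i (A ∆ B) : ZMod 2)) = low i A + low i B := by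
  have hf : (A ∆ B).filter (fun a => a < i) =
      (A.filter (fun a => a < i)) ∆ (B.filter (fun a => a < i)) := by
    ext a
    simp only [Finset.mem_filter, Finset.mem_symmDiff]
    tauto
  unfold low
  rw [hf]
  have := card_symmDiff_zmod (A.filter (fun a => a < i)) (B.filter (fun a => a < i))
  exact this

lemma symmDiff_singleton_of_not_mem {i : Fin n} {K : Finset (Fin n)} (h : i ∉ K) :
    K ∆ {i} = insert i K := by
  ext a
  simp only [Finset.mem_symmDiff, Finset.mem_singleton, Finset.mem_insert]
  constructor
  · rintro (⟨h1, h2⟩ | ⟨h1, h2⟩)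
    · exact Or.inr h1
    · exact Or.inl h1
  · rintro (rfl | h1)
    · exact Or.inr ⟨rfl, h⟩
    · exact Or.inl ⟨h1, fun he => h (he ▸ h1)⟩

lemma symmDiff_singleton_of_mem {i : Fin n} {K : Finset (Fin n)} (h : i ∈ K) :
    K ∆ {i} = K.erase i := by
  ext a
  simp only [Finset.mem_symmDiff, Finset.mem_singleton, Finset.mem_erase]
  constructor
  · rintro (⟨h1, h2⟩ | ⟨h1, h2⟩)
    · exact ⟨h2, h1⟩
    · exact absurd (h1 ▸ h) h2
  · rintro ⟨h1, h2⟩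
    exact Or.inl ⟨h2, h1⟩

end Aux15
namespace Aux15
open Finset

variable {n : ℕ}

lemma even_signExp_toggle_insert {N L K : Finset (Fin n)} (hNL : Disjoint N L)
    (hNK : N ⊆ K) (hKL : Disjoint K L) {i : Fin n} (hi : i ∈ (N ∪ L)ᶜ) (hiK : i ∉ K) :
    Even (signExp N L (K ∆ {i}) + signExp N L K + n + low i ((N ∪ L)ᶜ)) := by
  classical
  have hiNL : i ∉ N ∪ L := Finset.mem_compl.1 hi
  have hiN : i ∉ N := fun h => hiNL (Finset.mem_union_left _ h)
  have hiL : i ∉ L := fun h => hiNL (Finset.mem_union_right _ h)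
  set Sc : Finset (Fin n) := (N ∪ L)ᶜ with hSc
  set B : Finset (Fin n) := K ∆ Sc with hB
  have hiB : i ∈ B := by
    rw [hB, Finset.mem_symmDiff]
    exact Or.inr ⟨hi, hiK⟩
  have hiBc : i ∉ Bᶜ := by simpa using hiB
  have hK' : K ∆ {i} = insert i K := symmDiff_singleton_of_not_mem hiK
  have hB' : (K ∆ {i}) ∆ Sc = B.erase i := by
    rw [symmDiff_comm K {i}, symmDiff_assoc, ← hB, symmDiff_comm {i} B,
      symmDiff_singleton_of_mem hiB]
  have hBins : B = insert i (B.erase i) := (Finset.insert_erase hiB).symm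
  have hKN' : insert i K \ N = insert i (K \ N) := by
    ext a
    simp only [Finset.mem_sdiff, Finset.mem_insert]
    constructor
    · rintro ⟨rfl | h1, h2⟩
      · exact Or.inl rfl
      · exact Or.inr ⟨h1, h2⟩
    · rintro (rfl | ⟨h1, h2⟩)
      · exact ⟨Or.inl rfl, hiN⟩
      · exact ⟨Or.inr h1, h2⟩
  have hiKN : i ∉ K \ N := fun h => hiK (Finset.mem_sdiff.1 h).1
  -- unfold signExp and rewrite
  simp only [signExp]
  rw [← hSc, ← hB, hB', hK', hKN', Finset.compl_erase]
  rw [Finset.card_insert_of_notMem hiBc]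
  have hcB : B.card = (B.erase i).card + 1 := by
    rw [Finset.card_erase_add_one hiB]
  rw [hcB]
  -- linearize products and choose
  have e1 : (Bᶜ.card + 1) * (N.card + L.card)
      = Bᶜ.card * (N.card + L.card) + (N.card + L.card) := by ring
  have e2 : Nat.choose (Bᶜ.card + 1) 2 = Nat.choose Bᶜ.card 2 + Bᶜ.card := by
    rw [Nat.choose_succ_succ, Nat.choose_one_right, add_comm]
  have e4 : n * ((B.erase i).card + 1) = n * (B.erase i).card + n := by ring
  rw [e1, e2, e4]
  -- invCount facts
  have f3a : invCount (insert i Bᶜ) (B.erase i)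
      = low i (B.erase i) + invCount Bᶜ (B.erase i) := invCount_insert_left hiBc
  have f3a' : low i (B.erase i) = low i B := low_erase_self
  have f3b : invCount Bᶜ B = invCount Bᶜ (B.erase i) + high i Bᶜ := by
    have h := invCount_insert_right (A := Bᶜ) (Finset.notMem_erase i B)
    rw [Finset.insert_erase hiB] at h
    exact h
  have f3c : low i Bᶜ + high i Bᶜ = Bᶜ.card := low_add_high hiBc
  have f3d : low i Bᶜ + low i B = i.val := low_compl_add i B
  have f5a : invCount L (insert i (K \ N)) = invCount L (K \ N) + high i L :=
    invCount_insert_right L hiKN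
  have f5b : low i L + high i L = L.card := low_add_high hiL
  have f7a : invCount N (insert i (K \ N)) = invCount N (K \ N) + high i N :=
    invCount_insert_right N hiKN
  have f7b : low i N + high i N = N.card := low_add_high hiN
  have f8 : low i Sc + (low i N + low i L) = i.val := by
    rw [← low_union hNL, hSc, low_compl_add]
  rw [f3a, f3a', f3b, f5a, f7a]
  generalize Bᶜ.card * (N.card + L.card) = g1
  generalize n * (B.erase i).card = g2
  rw [Nat.even_iff]
  omega

lemma signExp_toggle {N L K : Finset (Fin n)} (hNL : Disjoint N L)
    (hNK : N ⊆ K) (hKL : Disjoint K L) {i : Fin n} (hi : i ∈ (N ∪ L)ᶜ) :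
    ((signExp N L (K ∆ {i}) : ZMod 2))
      = (signExp N L K : ZMod 2) + (n : ZMod 2) + (low i ((N ∪ L)ᶜ) : ZMod 2) := by
  classical
  have key : ∀ a b c d : ℕ, Even (a + b + c + d) → (a : ZMod 2) = (b : ZMod 2) + c + d := by
    intro a b c d h
    have h0 : ((a + b + c + d : ℕ) : ZMod 2) = 0 := by
      rcases h with ⟨t, ht⟩
      rw [ht]; push_cast; rw [show ((t : ZMod 2) + t) = 0 from zmod_two_add_self t]
    push_cast at h0
    have : ∀ x y : ZMod 2, x + y = 0 → x = y := by decide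
    exact this _ _ (by rw [← h0]; ring)
  have hiNL : i ∉ N ∪ L := Finset.mem_compl.1 hi
  have hiN : i ∉ N := fun h => hiNL (Finset.mem_union_left _ h)
  have hiL : i ∉ L := fun h => hiNL (Finset.mem_union_right _ h)
  by_cases hiK : i ∈ K
  · -- apply the insert case to K ∆ {i}
    have hK' : K ∆ {i} = K.erase i := symmDiff_singleton_of_mem hiK
    have h1 : N ⊆ K ∆ {i} := by
      rw [hK']
      intro a ha
      exact Finset.mem_erase.2 ⟨fun he => hiN (he ▸ ha), hNK ha⟩
    have h2 : Disjoint (K ∆ {i}) L := by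
      rw [hK']
      exact hKL.mono_left (Finset.erase_subset _ _)
    have h3 : i ∉ K ∆ {i} := by rw [hK']; exact Finset.notMem_erase i K
    have h4 : (K ∆ {i}) ∆ {i} = K := by
      rw [symmDiff_assoc, symmDiff_self, symmDiff_bot]
    have := even_signExp_toggle_insert hNL h1 h2 hi h3
    rw [h4] at this
    have h5 := key _ _ _ _ this
    rw [h5]
    have h6 : ∀ x u v : ZMod 2, x = x + u + v + u + v := by decide
    exact h6 _ _ _
  · exact key _ _ _ _ (even_signExp_toggle_insert hNL hNK hKL hi hiK)

end Aux15
namespace Aux15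
open Finset

variable {n : ℕ}

lemma cube_subset_N {N L K D : Finset (Fin n)} (hNK : N ⊆ K) (hD : D ⊆ (N ∪ L)ᶜ) :
    N ⊆ K ∆ D := by
  intro x hx
  rw [Finset.mem_symmDiff]
  exact Or.inl ⟨hNK hx, fun hxD => (Finset.mem_compl.1 (hD hxD)) (Finset.mem_union_left _ hx)⟩

lemma cube_disjoint_L {N L K D : Finset (Fin n)} (hKL : Disjoint K L) (hD : D ⊆ (N ∪ L)ᶜ) :
    Disjoint (K ∆ D) L := by
  rw [Finset.disjoint_left]
  intro x hx hxL
  rw [Finset.mem_symmDiff] at hx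
  rcases hx with ⟨h1, _⟩ | ⟨h1, _⟩
  · exact (Finset.disjoint_left.1 hKL) h1 hxL
  · exact (Finset.mem_compl.1 (hD h1)) (Finset.mem_union_right _ hxL)

lemma signExp_symmDiff {N L K : Finset (Fin n)} (hNL : Disjoint N L)
    (hNK : N ⊆ K) (hKL : Disjoint K L) {D : Finset (Fin n)} (hD : D ⊆ (N ∪ L)ᶜ) :
    ((signExp N L (K ∆ D) : ZMod 2))
      = (signExp N L K : ZMod 2) + D.card * (n : ZMod 2)
        + ∑ i ∈ D, (low i ((N ∪ L)ᶜ) : ZMod 2) := by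
  classical
  induction D using Finset.induction_on with
  | empty =>
    rw [show K ∆ (∅ : Finset (Fin n)) = K by rw [← Finset.bot_eq_empty, symmDiff_bot]]
    simp
  | insert _ _ hj ih =>
    rename_i j D'
    have hD' : D' ⊆ (N ∪ L)ᶜ := fun x hx => hD (Finset.mem_insert_of_mem hx)
    have hjSc : j ∈ (N ∪ L)ᶜ := hD (Finset.mem_insert_self j D')
    have h1 : K ∆ (insert j D') = (K ∆ D') ∆ {j} := by
      rw [← symmDiff_singleton_of_not_mem hj, ← symmDiff_assoc]
    rw [h1, signExp_toggle hNL (cube_subset_N hNK hD') (cube_disjoint_L hKL hD') hjSc,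
      ih hD', Finset.sum_insert hj, Finset.card_insert_of_notMem hj]
    push_cast
    ring

lemma low_antipode {K Sc : Finset (Fin n)} (i : Fin n) :
    ((-1 : ℂ)) ^ (low i K + low i (K ∆ Sc)) = (-1 : ℂ) ^ (low i Sc) := by
  apply neg_one_pow_eq
  push_cast
  rw [low_symmDiff_zmod]
  rw [show ((low i K : ZMod 2)) + ((low i K : ZMod 2) + low i Sc)
      = (low i K + low i K) + low i Sc by ring, zmod_two_add_self, zero_add]

lemma sum_pow_inter {α : Type*} [DecidableEq α] (S A : Finset α) (hA : A ⊆ S) :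
    (∑ M ∈ S.powerset, ((-1 : ℂ)) ^ (M ∩ A).card)
      = if A = ∅ then (2 : ℂ) ^ S.card else 0 := by
  classical
  have h1 : ∀ M : Finset α, ((-1 : ℂ)) ^ (M ∩ A).card
      = ∏ x ∈ M, (if x ∈ A then (-1 : ℂ) else 1) := by
    intro M
    rw [Finset.prod_ite, Finset.prod_const, Finset.prod_const, one_pow, mul_one,
      Finset.filter_mem_eq_inter]
  have h2 : (∑ M ∈ S.powerset, ((-1 : ℂ)) ^ (M ∩ A).card)
      = ∏ i ∈ S, ((if i ∈ A then (-1 : ℂ) else 1) + 1) := by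
    rw [Finset.prod_add]
    refine Finset.sum_congr rfl fun M hM => ?_
    rw [h1, Finset.prod_const_one, mul_one]
  rw [h2]
  by_cases hAe : A = ∅
  · subst hAe
    rw [if_pos rfl]
    rw [Finset.prod_congr rfl (fun i _ => by norm_num : ∀ i ∈ S, ((if i ∈ (∅ : Finset α) then (-1 : ℂ) else 1) + 1) = 2)]
    rw [Finset.prod_const]
  · rw [if_neg hAe]
    obtain ⟨a, haA⟩ := Finset.nonempty_of_ne_empty hAe
    exact Finset.prod_eq_zero (hA haA) (by rw [if_pos haA]; ring)

end Aux15
namespace Aux15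
open Finset

lemma arith (n m μ : ℕ) (hgood : (μ + n * m + Nat.choose m 2) % 2 = 0)
    (hne : ((-1 : ℤ)) ^ n * ((m : ℤ) - 2 * μ) ≠ (if Odd m then (1 : ℤ) else 0)) :
    ((2 * (μ : ℤ) - (m : ℤ) - ((n % 2 : ℕ) : ℤ) + (((m + n) % 2 : ℕ) : ℤ)) % 4 = 0) ∧
    2 * (μ : ℤ) ≠ (m : ℤ) - 2 ∧ 2 * (μ : ℤ) ≠ (m : ℤ) - 1 ∧ 2 * (μ : ℤ) ≠ (m : ℤ) ∧
    2 * (μ : ℤ) ≠ (m : ℤ) + 1 ∧ 2 * (μ : ℤ) ≠ (m : ℤ) + 2 := by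
  have hdvd : 2 ∣ m * (m - 1) := by
    rcases Nat.even_or_odd m with he | ho
    · exact Dvd.dvd.mul_right he.two_dvd _
    · refine Dvd.dvd.mul_left ?_ _
      obtain ⟨k, hk⟩ := ho
      exact ⟨k, by omega⟩
  have hC : Nat.choose m 2 * 2 = m * (m - 1) := by
    rw [Nat.choose_two_right]
    exact Nat.div_mul_cancel hdvd
  have hmm : m * (m - 1) + 4 * m = m * m + 3 * m := by
    cases m with
    | zero => rfl
    | succ k => simp only [Nat.succ_sub_one]; ring
  have hC2 : Nat.choose m 2 * 2 + 4 * m = m * m + 3 * m := by rw [hC]; exact hmm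
  obtain ⟨t, ht⟩ : ∃ t, μ + n * m + Nat.choose m 2 = 2 * t :=
    ⟨(μ + n * m + Nat.choose m 2) / 2, by omega⟩
  obtain ⟨a, e, ha, he2⟩ : ∃ a e, n = 2 * a + e ∧ e < 2 := ⟨n / 2, n % 2, by omega, by omega⟩
  obtain ⟨b, r, hb, hr4⟩ : ∃ b r, m = 4 * b + r ∧ r < 4 := ⟨m / 4, m % 4, by omega, by omega⟩
  subst ha hb
  have h1 : ((μ : ℤ) + (2 * a + e) * (4 * b + r) + (Nat.choose (4 * b + r) 2 : ℤ)) = 2 * t := by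
    exact_mod_cast ht
  have h2 : ((Nat.choose (4 * b + r) 2 : ℤ)) * 2 + 4 * (4 * b + r)
      = (4 * (b : ℤ) + r) * (4 * b + r) + 3 * (4 * b + r) := by exact_mod_cast hC2
  have hq : 2 * ((2 * (a : ℤ) + e) * (4 * b + r)) + ((4 * (b : ℤ) + r) * (4 * b + r) + 3 * (4 * b + r))
      = 4 * (4 * a * b + a * r + 2 * e * b + 4 * b * b + 2 * b * r + 3 * b)
        + (2 * e * r + r * r + 3 * r) := by ring
  have key : 2 * (μ : ℤ) + (2 * (e : ℤ) * r + r * r + 3 * r)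
      = 4 * ((t : ℤ) - (4 * a * b + a * r + 2 * e * b + 4 * b * b + 2 * b * r + 3 * b)
          + (4 * b + r)) := by
    linear_combination (2 : ℤ) * h1 - h2 - hq
  interval_cases e <;> interval_cases r <;>
    simp only [pow_add, pow_mul, neg_one_sq, one_pow, pow_zero, pow_one, one_mul,
      neg_one_mul, Nat.odd_iff] at hne <;>
    (first
      | rw [if_pos (by omega : (_ % 2 = 1))] at hne
      | rw [if_neg (by omega : ¬ (_ % 2 = 1))] at hne) <;>
    exact ⟨by omega, by omega, by omega, by omega, by omega, by omega⟩

end Aux15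
namespace Aux15
open Finset

variable {n : ℕ}

lemma zmod2_cancel {x y z : ZMod 2} (h : x + y = z) : x = z + y := by
  revert h; revert x y z; decide

lemma odd_cast_one {x : ℕ} (h : Odd x) : ((x : ZMod 2)) = 1 := by
  obtain ⟨k, hk⟩ := h
  subst hk
  push_cast
  rw [show (2 : ZMod 2) = 0 by decide]
  ring

lemma card_sdiff_zmod (M K : Finset (Fin n)) :
    (((M \ K).card : ZMod 2)) = M.card + (M ∩ K).card := by
  have h := Finset.card_sdiff_add_card_inter M K
  have h' : (((M \ K).card : ZMod 2)) + ((M ∩ K).card : ZMod 2) = (M.card : ZMod 2) := by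
    exact_mod_cast congrArg (Nat.cast : ℕ → ZMod 2) h
  exact zmod2_cancel h'

lemma compl_inter_eq_sdiff (A M : Finset (Fin n)) : Aᶜ ∩ M = M \ A := by
  ext x
  simp only [Finset.mem_inter, Finset.mem_compl, Finset.mem_sdiff]
  tauto

/-- reindexing the cube sum by `D = K ∆ K'` -/
lemma pEq_reindex {N L K : Finset (Fin n)} (hNK : N ⊆ K) (hKL : Disjoint K L)
    (M : Finset (Fin n)) :
    pEq n N L M = ∑ D ∈ ((N ∪ L)ᶜ : Finset (Fin n)).powerset,
      ((-1 : ℂ)) ^ ((((K ∆ D)ᶜ ∩ M).card + signExp N L (K ∆ D))) •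
        (X (K ∆ D) * X ((K ∆ D) ∆ (N ∪ L)ᶜ)) := by
  classical
  unfold pEq
  refine Finset.sum_nbij' (i := fun K' => K ∆ K') (j := fun D => K ∆ D) ?_ ?_ ?_ ?_ ?_
  · intro K' hK'
    rw [Finset.mem_filter] at hK'
    obtain ⟨-, hNK', hK'L⟩ := hK'
    rw [Finset.mem_powerset]
    intro x hx
    rw [Finset.mem_symmDiff] at hx
    rw [Finset.mem_compl, Finset.mem_union]
    rcases hx with ⟨h1, h2⟩ | ⟨h1, h2⟩
    · rintro (hN | hL)
      · exact h2 (hNK' hN)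
      · exact (Finset.disjoint_left.1 hKL) h1 hL
    · rintro (hN | hL)
      · exact h2 (hNK hN)
      · exact (Finset.disjoint_left.1 hK'L) h1 hL
  · intro D hD
    rw [Finset.mem_powerset] at hD
    rw [Finset.mem_filter]
    exact ⟨Finset.mem_univ _, cube_subset_N hNK hD, cube_disjoint_L hKL hD⟩
  · intro K' _; exact symmDiff_symmDiff_cancel_left K K'
  · intro D _; exact symmDiff_symmDiff_cancel_left K D
  · intro K' _
    rw [symmDiff_symmDiff_cancel_left]

/-- parity of the two exponents at antipodal points -/
lemma antipode_exponent {N L K' M : Finset (Fin n)} (hM : M ⊆ (N ∪ L)ᶜ)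
    (hNK' : N ⊆ K') (hK'L : Disjoint K' L) (hNL : Disjoint N L) :
    ((((K' ∆ (N ∪ L)ᶜ)ᶜ ∩ M).card + signExp N L (K' ∆ (N ∪ L)ᶜ) : ℕ) : ZMod 2)
      = ((K'ᶜ ∩ M).card + signExp N L K' : ℕ)
        + (M.card + n * ((N ∪ L)ᶜ).card + Nat.choose ((N ∪ L)ᶜ).card 2 : ℕ) := by
  classical
  set Sc : Finset (Fin n) := (N ∪ L)ᶜ with hSc
  have hsE := signExp_symmDiff (K := K') hNL hNK' hK'L (D := Sc) Subset.rfl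
  have hcard1 : ((K' ∆ Sc)ᶜ ∩ M) = K' ∩ M := by
    ext x
    simp only [Finset.mem_inter, Finset.mem_compl, Finset.mem_symmDiff]
    constructor
    · rintro ⟨h1, h2⟩
      refine ⟨?_, h2⟩
      by_contra hxK
      exact h1 (Or.inr ⟨hM h2, hxK⟩)
    · rintro ⟨h1, h2⟩
      refine ⟨?_, h2⟩
      rintro (⟨-, h3⟩ | ⟨-, h3⟩)
      · exact h3 (hM h2)
      · exact h3 h1
  have hcard2 : (K'ᶜ ∩ M).card + (K' ∩ M).card = M.card := by
    rw [compl_inter_eq_sdiff, Finset.inter_comm]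
    exact Finset.card_sdiff_add_card_inter M K'
  have hsum : (∑ i ∈ Sc, ((low i Sc : ZMod 2))) = ((Nat.choose Sc.card 2 : ℕ) : ZMod 2) := by
    rw [← sum_low_self Sc]
    push_cast
    rfl
  have h2 : ((K' ∩ M).card : ZMod 2) = (M.card : ZMod 2) + ((K'ᶜ ∩ M).card : ZMod 2) := by
    apply zmod2_cancel
    have := congrArg (Nat.cast : ℕ → ZMod 2) hcard2
    push_cast at this
    rw [← this]; ring
  rw [hcard1]
  push_cast
  rw [hsE, hsum, h2]
  push_cast
  ring

/-- "bad" equations vanish -/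
lemma pEq_vanish {N L M : Finset (Fin n)} (hNL : Disjoint N L) (hM : M ⊆ (N ∪ L)ᶜ)
    (hbad : Odd (M.card + n * ((N ∪ L)ᶜ).card + Nat.choose ((N ∪ L)ᶜ).card 2)) :
    pEq n N L M = 0 := by
  classical
  unfold pEq
  set Sc : Finset (Fin n) := (N ∪ L)ᶜ with hSc
  apply Finset.sum_involution (g := fun K' _ => K' ∆ Sc)
  · intro K' hK'
    rw [Finset.mem_filter] at hK'
    obtain ⟨-, hNK', hK'L⟩ := hK'
    have hexp := antipode_exponent (n := n) hM hNK' hK'L hNL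
    rw [← hSc] at hexp
    have hodd := odd_cast_one hbad
    rw [hodd] at hexp
    have hsign : ((-1 : ℂ)) ^ (((K' ∆ Sc)ᶜ ∩ M).card + signExp N L (K' ∆ Sc))
        = -((-1 : ℂ)) ^ ((K'ᶜ ∩ M).card + signExp N L K') := by
      have hcond : (((((K' ∆ Sc)ᶜ ∩ M).card + signExp N L (K' ∆ Sc)) : ℕ) : ZMod 2)
          = (((((K'ᶜ ∩ M).card + signExp N L K') + 1) : ℕ) : ZMod 2) := by
        rw [hexp]; push_cast; ring
      rw [neg_one_pow_eq hcond, pow_succ]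
      ring
    have hXX : (K' ∆ Sc) ∆ Sc = K' := by
      rw [symmDiff_assoc, symmDiff_self, symmDiff_bot]
    rw [hsign, hXX, mul_comm (X (K' ∆ Sc)) (X K')]
    rw [neg_smul]
    ring
  · intro K' hK' hf hfix
    -- fixed point forces Sc = ∅, contradicting oddness
    have hScE : Sc = ∅ := by
      have h1 : K' ∆ (K' ∆ Sc) = K' ∆ K' := congrArg (K' ∆ ·) hfix
      rw [symmDiff_symmDiff_cancel_left, symmDiff_self] at h1
      rw [h1]; rfl
    rw [hScE] at hM hbad
    rw [Finset.subset_empty.1 hM] at hbad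
    simp at hbad
  · intro K' hK'
    rw [Finset.mem_filter] at hK' ⊢
    obtain ⟨-, hNK', hK'L⟩ := hK'
    exact ⟨Finset.mem_univ _, cube_subset_N hNK' Subset.rfl, cube_disjoint_L hK'L Subset.rfl⟩
  · intro K' hK'
    rw [symmDiff_assoc, symmDiff_self, symmDiff_bot]

end Aux15
namespace Aux15
open Finset

variable {n : ℕ}

lemma card_inter_singleton_pow (M : Finset (Fin n)) (j : Fin n) :
    ((-1 : ℂ)) ^ (M ∩ {j}).card = if j ∈ M then (-1 : ℂ) else 1 := by
  by_cases hj : j ∈ M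
  · rw [if_pos hj, show M ∩ {j} = {j} by
      ext x; simp only [Finset.mem_inter, Finset.mem_singleton]
      exact ⟨fun h => h.2, fun h => ⟨h ▸ hj, h⟩⟩]
    simp
  · rw [if_neg hj, show M ∩ {j} = ∅ by
      ext x; simp only [Finset.mem_inter, Finset.mem_singleton, Finset.notMem_empty, iff_false,
        not_and]
      rintro hx rfl; exact hj hx]
    simp

lemma card_linear (S M : Finset (Fin n)) (hMS : M ⊆ S) :
    ((S.card : ℂ)) - 2 * M.card = ∑ j ∈ S, ((-1 : ℂ)) ^ (M ∩ {j}).card := by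
  rw [Finset.sum_congr rfl (fun j _ => card_inter_singleton_pow M j)]
  rw [Finset.sum_ite, Finset.sum_const, Finset.sum_const, Finset.filter_mem_eq_inter,
    Finset.inter_eq_right.2 hMS]
  have hcard : (S.filter (fun j => ¬ j ∈ M)).card = S.card - M.card := by
    have h := Finset.card_filter_add_card_filter_not (s := S) (p := (· ∈ M))
    rw [Finset.filter_mem_eq_inter, Finset.inter_eq_right.2 hMS] at h
    omega
  rw [hcard, nsmul_eq_mul, nsmul_eq_mul, Nat.cast_sub (Finset.card_le_card hMS)]
  ring

lemma sum_pow_inter_weighted (S A : Finset (Fin n)) (hA : A ⊆ S) :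
    (∑ M ∈ S.powerset, ((-1 : ℂ)) ^ (M ∩ A).card * ((S.card : ℂ) - 2 * M.card))
      = ∑ j ∈ S, (if A = {j} then (2 : ℂ) ^ S.card else 0) := by
  classical
  have step1 : ∀ M ∈ S.powerset, ((-1 : ℂ)) ^ (M ∩ A).card * ((S.card : ℂ) - 2 * M.card)
      = ∑ j ∈ S, ((-1 : ℂ)) ^ (M ∩ (A ∆ {j})).card := by
    intro M hM
    rw [card_linear S M (Finset.mem_powerset.1 hM), Finset.mul_sum]
    refine Finset.sum_congr rfl fun j _ => ?_
    rw [← pow_add]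
    apply neg_one_pow_eq
    push_cast
    have h := card_inter_symmDiff_zmod M A {j}
    rw [h]
  rw [Finset.sum_congr rfl step1, Finset.sum_comm]
  refine Finset.sum_congr rfl fun j hj => ?_
  have hsub : A ∆ {j} ⊆ S := by
    intro x hx
    rw [Finset.mem_symmDiff] at hx
    rcases hx with ⟨h1, -⟩ | ⟨h1, -⟩
    · exact hA h1
    · exact (Finset.mem_singleton.1 h1) ▸ hj
  rw [sum_pow_inter S (A ∆ {j}) hsub]
  congr 1
  rw [eq_iff_iff, ← Finset.bot_eq_empty, symmDiff_eq_bot]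

end Aux15
namespace Aux15
open Finset

variable {n : ℕ}

noncomputable def coef (n : ℕ) (N L K M : Finset (Fin n)) : ℂ :=
  ((2 : ℂ) ^ (((N ∪ L)ᶜ : Finset (Fin n)).card))⁻¹
    * ((-1 : ℂ)) ^ (signExp N L K + (Kᶜ ∩ M).card)
    * (((-1 : ℂ)) ^ n * ((((N ∪ L)ᶜ : Finset (Fin n)).card : ℂ) - 2 * M.card)
        - (if Odd (((N ∪ L)ᶜ : Finset (Fin n)).card) then (1 : ℂ) else 0))

lemma exEq_combo {N L K : Finset (Fin n)} (hNL : Disjoint N L) (hNK : N ⊆ K)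
    (hKL : Disjoint K L) :
    exEq n N L K = ∑ M ∈ ((N ∪ L)ᶜ : Finset (Fin n)).powerset,
      coef n N L K M • pEq n N L M := by
  classical
  set o : ℂ := if Odd (((N ∪ L)ᶜ : Finset (Fin n)).card) then (1 : ℂ) else 0 with ho
  have e1 : ∀ M ∈ ((N ∪ L)ᶜ : Finset (Fin n)).powerset,
      coef n N L K M • pEq n N L M
        = ∑ D ∈ ((N ∪ L)ᶜ : Finset (Fin n)).powerset,
            (coef n N L K M
              * ((-1 : ℂ)) ^ (((K ∆ D)ᶜ ∩ M).card + signExp N L (K ∆ D))) •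
              (X (K ∆ D) * X ((K ∆ D) ∆ (N ∪ L)ᶜ)) := by
    intro M _
    rw [pEq_reindex hNK hKL M, Finset.smul_sum]
    exact Finset.sum_congr rfl fun D _ => (smul_smul _ _ _)
  rw [Finset.sum_congr rfl e1, Finset.sum_comm]
  have e2 : ∀ D ∈ ((N ∪ L)ᶜ : Finset (Fin n)).powerset,
      (∑ M ∈ ((N ∪ L)ᶜ : Finset (Fin n)).powerset,
        (coef n N L K M
          * ((-1 : ℂ)) ^ (((K ∆ D)ᶜ ∩ M).card + signExp N L (K ∆ D))) •
          (X (K ∆ D) * X ((K ∆ D) ∆ (N ∪ L)ᶜ) : MvPolynomial (Finset (Fin n)) ℂ))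
      = ((if D = ∅ then -o else 0)
          + ∑ j ∈ ((N ∪ L)ᶜ : Finset (Fin n)), (if D = {j} then
              ((-1 : ℂ)) ^ (low j ((N ∪ L)ᶜ)) else 0)) •
          (X (K ∆ D) * X ((K ∆ D) ∆ (N ∪ L)ᶜ)) := by
    intro D hD
    have hDS : D ⊆ (N ∪ L)ᶜ := Finset.mem_powerset.1 hD
    rw [← Finset.sum_smul]
    congr 1
    -- per-M rewrite
    have hper : ∀ M ∈ ((N ∪ L)ᶜ : Finset (Fin n)).powerset,
        coef n N L K M * ((-1 : ℂ)) ^ (((K ∆ D)ᶜ ∩ M).card + signExp N L (K ∆ D))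
          = (((2 : ℂ) ^ (((N ∪ L)ᶜ : Finset (Fin n)).card))⁻¹
              * ((-1 : ℂ)) ^ (n * D.card + ∑ i ∈ D, low i ((N ∪ L)ᶜ)))
            * (((-1 : ℂ)) ^ ((M ∩ D).card)
              * (((-1 : ℂ)) ^ n * ((((N ∪ L)ᶜ : Finset (Fin n)).card : ℂ) - 2 * M.card) - o)) := by
      intro M _
      have hsE := signExp_symmDiff hNL hNK hKL hDS
      have ha' : (((Kᶜ ∩ M).card : ℕ) : ZMod 2)
          = ((M.card : ℕ) : ZMod 2) + (((M ∩ K).card : ℕ) : ZMod 2) := by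
        rw [compl_inter_eq_sdiff]
        exact card_sdiff_zmod M K
      have hb' : ((((K ∆ D)ᶜ ∩ M).card : ℕ) : ZMod 2)
          = ((M.card : ℕ) : ZMod 2) + (((M ∩ K).card : ℕ) : ZMod 2)
            + (((M ∩ D).card : ℕ) : ZMod 2) := by
        rw [compl_inter_eq_sdiff, card_sdiff_zmod]
        rw [card_inter_symmDiff_zmod]
        ring
      have hsgn : ((-1 : ℂ)) ^ (signExp N L K + (Kᶜ ∩ M).card)
            * ((-1 : ℂ)) ^ (((K ∆ D)ᶜ ∩ M).card + signExp N L (K ∆ D))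
          = ((-1 : ℂ)) ^ (n * D.card + ∑ i ∈ D, low i ((N ∪ L)ᶜ))
            * ((-1 : ℂ)) ^ ((M ∩ D).card) := by
        rw [← pow_add, ← pow_add]
        apply neg_one_pow_eq
        push_cast
        linear_combination hsE + ha' + hb'
          + zmod_two_add_self ((signExp N L K : ℕ) : ZMod 2)
          + zmod_two_add_self ((M.card : ℕ) : ZMod 2)
          + zmod_two_add_self (((M ∩ K).card : ℕ) : ZMod 2)
      unfold coef
      rw [← ho]
      linear_combination (((2 : ℂ) ^ (((N ∪ L)ᶜ : Finset (Fin n)).card))⁻¹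
        * (((-1 : ℂ)) ^ n * ((((N ∪ L)ᶜ : Finset (Fin n)).card : ℂ) - 2 * M.card) - o)) * hsgn
    rw [Finset.sum_congr rfl hper, ← Finset.mul_sum]
    have split : (∑ M ∈ ((N ∪ L)ᶜ : Finset (Fin n)).powerset,
        ((-1 : ℂ)) ^ ((M ∩ D).card)
          * (((-1 : ℂ)) ^ n * ((((N ∪ L)ᶜ : Finset (Fin n)).card : ℂ) - 2 * M.card) - o))
      = ((-1 : ℂ)) ^ n * (∑ M ∈ ((N ∪ L)ᶜ : Finset (Fin n)).powerset,
            ((-1 : ℂ)) ^ ((M ∩ D).card) * ((((N ∪ L)ᶜ : Finset (Fin n)).card : ℂ) - 2 * M.card))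
        - o * (∑ M ∈ ((N ∪ L)ᶜ : Finset (Fin n)).powerset, ((-1 : ℂ)) ^ ((M ∩ D).card)) := by
      rw [Finset.mul_sum, Finset.mul_sum, ← Finset.sum_sub_distrib]
      exact Finset.sum_congr rfl fun M _ => by ring
    rw [split, sum_pow_inter_weighted _ D hDS, sum_pow_inter _ D hDS]
    by_cases hD0 : D = ∅
    · subst hD0
      rw [if_pos rfl, if_pos rfl]
      have hz : (∑ j ∈ ((N ∪ L)ᶜ : Finset (Fin n)), (if (∅ : Finset (Fin n)) = {j} then
            (2 : ℂ) ^ (((N ∪ L)ᶜ : Finset (Fin n)).card) else 0)) = 0 :=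
        Finset.sum_eq_zero fun j _ => if_neg (fun h => (Finset.singleton_ne_empty j) h.symm)
      have hz2 : (∑ j ∈ ((N ∪ L)ᶜ : Finset (Fin n)), (if (∅ : Finset (Fin n)) = {j} then
            ((-1 : ℂ)) ^ (low j ((N ∪ L)ᶜ)) else 0)) = 0 :=
        Finset.sum_eq_zero fun j _ => if_neg (fun h => (Finset.singleton_ne_empty j) h.symm)
      rw [hz, hz2, Finset.card_empty, Finset.sum_empty]
      have h2 : ((2 : ℂ)) ^ (((N ∪ L)ᶜ : Finset (Fin n)).card) ≠ 0 := pow_ne_zero _ two_ne_zero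
      field_simp
      simp
    · rw [if_neg hD0, if_neg hD0, zero_add, mul_zero, sub_zero, Finset.mul_sum, Finset.mul_sum]
      refine Finset.sum_congr rfl fun j hj => ?_
      by_cases hDj : D = {j}
      · subst hDj
        rw [if_pos rfl, if_pos rfl, Finset.card_singleton, Finset.sum_singleton]
        have hp : ((-1 : ℂ)) ^ (n * 1 + low j ((N ∪ L)ᶜ)) * ((-1 : ℂ)) ^ n
            = ((-1 : ℂ)) ^ (low j ((N ∪ L)ᶜ)) := by
          rw [← pow_add]
          apply neg_one_pow_eq
          push_cast
          linear_combination zmod_two_add_self ((n : ℕ) : ZMod 2)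
        have h2 : ((2 : ℂ) ^ (((N ∪ L)ᶜ : Finset (Fin n)).card))⁻¹
            * ((2 : ℂ) ^ (((N ∪ L)ᶜ : Finset (Fin n)).card)) = 1 :=
          inv_mul_cancel₀ (pow_ne_zero _ two_ne_zero)
        rw [← hp]
        linear_combination (((-1 : ℂ)) ^ (n * 1 + low j ((N ∪ L)ᶜ))
          * ((-1 : ℂ)) ^ n) * h2
      · rw [if_neg hDj, if_neg hDj, mul_zero, mul_zero]
  rw [Finset.sum_congr rfl e2]
  -- expand the weights
  have e3 : ∀ D ∈ ((N ∪ L)ᶜ : Finset (Fin n)).powerset,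
      ((if D = ∅ then -o else 0)
        + ∑ j ∈ ((N ∪ L)ᶜ : Finset (Fin n)), (if D = {j} then
            ((-1 : ℂ)) ^ (low j ((N ∪ L)ᶜ)) else 0)) •
        (X (K ∆ D) * X ((K ∆ D) ∆ (N ∪ L)ᶜ) : MvPolynomial (Finset (Fin n)) ℂ)
      = (if D = ∅ then (-o) • (X (K ∆ D) * X ((K ∆ D) ∆ (N ∪ L)ᶜ)) else 0)
        + ∑ j ∈ ((N ∪ L)ᶜ : Finset (Fin n)), (if D = {j} then
            ((-1 : ℂ)) ^ (low j ((N ∪ L)ᶜ)) • (X (K ∆ D) * X ((K ∆ D) ∆ (N ∪ L)ᶜ)) else 0) := by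
    intro D _
    rw [add_smul, Finset.sum_smul]
    congr 1
    · by_cases hD0 : D = ∅
      · simp [hD0]
      · simp [hD0]
    · refine Finset.sum_congr rfl fun j _ => ?_
      by_cases hDj : D = {j}
      · simp [hDj]
      · simp [hDj]
  rw [Finset.sum_congr rfl e3, Finset.sum_add_distrib]
  rw [Finset.sum_ite_eq' _ (∅ : Finset (Fin n)), if_pos (Finset.empty_mem_powerset _)]
  rw [Finset.sum_comm]
  have e4 : ∀ j ∈ ((N ∪ L)ᶜ : Finset (Fin n)),
      (∑ D ∈ ((N ∪ L)ᶜ : Finset (Fin n)).powerset, (if D = {j} then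
        ((-1 : ℂ)) ^ (low j ((N ∪ L)ᶜ)) • (X (K ∆ D) * X ((K ∆ D) ∆ (N ∪ L)ᶜ)) else 0))
      = ((-1 : ℂ)) ^ (low j ((N ∪ L)ᶜ)) •
          (X (K ∆ {j}) * X ((K ∆ {j}) ∆ (N ∪ L)ᶜ) : MvPolynomial (Finset (Fin n)) ℂ) := by
    intro j hj
    rw [Finset.sum_ite_eq' _ ({j} : Finset (Fin n)),
      if_pos (Finset.mem_powerset.2 (Finset.singleton_subset_iff.2 hj))]
  rw [Finset.sum_congr rfl e4]
  -- match with exEq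
  unfold exEq
  have hK0 : K ∆ (∅ : Finset (Fin n)) = K := by
    rw [← Finset.bot_eq_empty, symmDiff_bot]
  rw [hK0]
  have e5 : ∀ i ∈ ((N ∪ L)ᶜ : Finset (Fin n)),
      ((-1 : ℂ)) ^ (low i K + low i (K ∆ (N ∪ L)ᶜ)) •
        (X (K ∆ {i}) * X ((K ∆ (N ∪ L)ᶜ) ∆ {i}))
      = ((-1 : ℂ)) ^ (low i ((N ∪ L)ᶜ)) •
          (X (K ∆ {i}) * X ((K ∆ {i}) ∆ (N ∪ L)ᶜ) : MvPolynomial (Finset (Fin n)) ℂ) := by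
    intro i _
    rw [low_antipode i, symmDiff_assoc, symmDiff_comm ((N ∪ L)ᶜ) ({i} : Finset (Fin n)),
      ← symmDiff_assoc]
  rw [Finset.sum_congr rfl e5]
  have e6 : (-o) • (X K * X (K ∆ (N ∪ L)ᶜ) : MvPolynomial (Finset (Fin n)) ℂ)
      = -(if Odd (((N ∪ L)ᶜ : Finset (Fin n)).card) then X K * X (K ∆ (N ∪ L)ᶜ) else 0) := by
    rw [ho]
    by_cases h : Odd (((N ∪ L)ᶜ : Finset (Fin n)).card)
    · rw [if_pos h, if_pos h, neg_smul, one_smul]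
    · rw [if_neg h, if_neg h]; simp
  rw [e6, sub_eq_add_neg, add_comm]

end Aux15

/-- Every quadratic embedding equation `ex_{(K,K̄)}` lies in the span
of the full family of Lichtenstein embedding equations. -/
theorem exEq_mem_span_pEq (n : ℕ) (N L K : Finset (Fin n))
    (hNL : Disjoint N L) (hNK : N ⊆ K) (hKL : Disjoint K L) :
    exEq n N L K ∈ Submodule.span ℂ
      {p : MvPolynomial (Finset (Fin n)) ℂ |
        ∃ M N' L' : Finset (Fin n),
          Disjoint M N' ∧ Disjoint M L' ∧ Disjoint N' L' ∧
          ((2 * M.card : ℤ)) ∈ admissible n N' L' ∧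
          p = pEq n N' L' M} := by
  classical
  rw [Aux15.exEq_combo hNL hNK hKL]
  apply Submodule.sum_mem
  intro M hM
  have hMS : M ⊆ ((N ∪ L)ᶜ : Finset (Fin n)) := Finset.mem_powerset.1 hM
  by_cases hbad : Odd (M.card + n * (((N ∪ L)ᶜ : Finset (Fin n))).card
      + Nat.choose (((N ∪ L)ᶜ : Finset (Fin n))).card 2)
  · rw [Aux15.pEq_vanish hNL hMS hbad, smul_zero]
    exact Submodule.zero_mem _
  · by_cases hc : Aux15.coef n N L K M = 0
    · rw [hc, zero_smul]
      exact Submodule.zero_mem _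
    · refine Submodule.smul_mem _ _ (Submodule.subset_span ?_)
      have hMN : Disjoint M N := by
        rw [Finset.disjoint_left]
        intro a haM haN
        exact (Finset.mem_compl.1 (hMS haM)) (Finset.mem_union_left _ haN)
      have hML : Disjoint M L := by
        rw [Finset.disjoint_left]
        intro a haM haL
        exact (Finset.mem_compl.1 (hMS haM)) (Finset.mem_union_right _ haL)
      refine ⟨M, N, L, hMN, hML, hNL, ?_, rfl⟩
      -- admissibility
      set m : ℕ := (((N ∪ L)ᶜ : Finset (Fin n))).card with hmdef
      have hgood : (M.card + n * m + Nat.choose m 2) % 2 = 0 := by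
        rw [Nat.odd_iff] at hbad
        omega
      have hE : ((-1 : ℂ)) ^ n * ((m : ℂ) - 2 * M.card)
          - (if Odd m then (1 : ℂ) else 0) ≠ 0 := by
        intro h
        apply hc
        unfold Aux15.coef
        rw [← hmdef, h, mul_zero]
      have hne : ((-1 : ℤ)) ^ n * ((m : ℤ) - 2 * M.card)
          ≠ (if Odd m then (1 : ℤ) else 0) := by
        intro h
        apply hE
        have : ((((-1 : ℤ)) ^ n * ((m : ℤ) - 2 * M.card)
            - (if Odd m then (1 : ℤ) else 0) : ℤ) : ℂ)
            = ((-1 : ℂ)) ^ n * ((m : ℂ) - 2 * M.card) - (if Odd m then (1 : ℂ) else 0) := by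
          push_cast [apply_ite (Int.cast : ℤ → ℂ)]
          ring
        rw [← this, sub_eq_zero.2 h, Int.cast_zero]
      obtain ⟨hmod, hb1, hb2, hb3, hb4, hb5⟩ := Aux15.arith n m M.card hgood hne
      have hm : m + (N.card + L.card) = n := by
        have h1 : m = Fintype.card (Fin n) - (N ∪ L).card := by
          rw [hmdef, Finset.card_compl]
        have h2 : (N ∪ L).card = N.card + L.card := Finset.card_union_of_disjoint hNL
        have h3 : (N ∪ L).card ≤ Fintype.card (Fin n) := Finset.card_le_univ _
        rw [Fintype.card_fin] at h1 h3
        omega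
      have h2div : 2 * ((n + 1) / 2) = n + n % 2 := by omega
      constructor
      · refine ⟨(2 * (M.card : ℤ) - (m : ℤ) - ((n % 2 : ℕ) : ℤ) + (((m + n) % 2 : ℕ) : ℤ)) / 4,
          (((m + n) % 2 : ℕ) : ℤ), by omega, ?_⟩
        omega
      · intro hcontra
        simp only [Set.mem_insert_iff, Set.mem_singleton_iff] at hcontra
        rcases hcontra with h | h | h | h | h <;> omega
end
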